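/- arXiv:2203.16951 — 9 statements merged into one kernel-verified Lean document; each statement's English description precedes it below -/
import Mathlib

section
/- Let n ≥ 2 and let μ be a probability measure on ℝ^n such that no affine hyperplane has μ-measure 1. Then for every x^o ∈ ℝ^n and every x ∈ ℝ^n with x ≠ x^o, the integral ∫ (‖a − x‖ − ‖a − x^o‖)² dμ(a) is strictly positive. Consequently the function x ↦ ∫ (‖a − x‖ − ‖a − x^o‖)² dμ(a) attains the value 0 only at x = x^o (the target is asymptotically uniquely localizable). -/
open MeasureTheory

/-- If no affine hyperplane has full measure, then the asymptotic S-LS criterion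
`x ↦ ∫ (‖a − x‖ − ‖a − x^o‖)² dμ(a)` is strictly positive for `x ≠ x^o`, hence
vanishes only at `x = x^o` (asymptotically unique localizability). -/
theorem asymptotically_uniquely_localizable
    (n : ℕ) (hn : 2 ≤ n)
    (μ : Measure (EuclideanSpace ℝ (Fin n))) [IsProbabilityMeasure μ]
    (hplane : ∀ u : EuclideanSpace ℝ (Fin n), u ≠ 0 → ∀ t : ℝ,
      μ {a | (inner ℝ u a : ℝ) = t} ≠ 1)
    (xo : EuclideanSpace ℝ (Fin n)) :
    (∀ x : EuclideanSpace ℝ (Fin n), x ≠ xo →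
      0 < ∫ a, (‖a - x‖ - ‖a - xo‖) ^ 2 ∂μ) ∧
    (∀ x : EuclideanSpace ℝ (Fin n),
      (∫ a, (‖a - x‖ - ‖a - xo‖) ^ 2 ∂μ) = 0 → x = xo) := by
  have main : ∀ x : EuclideanSpace ℝ (Fin n), x ≠ xo →
      0 < ∫ a, (‖a - x‖ - ‖a - xo‖) ^ 2 ∂μ := by
    intro x hx
    set u : EuclideanSpace ℝ (Fin n) := x - xo with hu_def
    have hu : u ≠ 0 := sub_ne_zero.mpr hx
    set t : ℝ := (‖x‖ ^ 2 - ‖xo‖ ^ 2) / 2 with ht_def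
    have key : ∀ a : EuclideanSpace ℝ (Fin n),
        ((‖a - x‖ - ‖a - xo‖) ^ 2 = 0) ↔ (inner ℝ u a : ℝ) = t := by
      intro a
      rw [pow_eq_zero_iff (two_ne_zero), sub_eq_zero]
      have hx2 : ‖a - x‖ ^ 2 = ‖a‖ ^ 2 - 2 * inner ℝ a x + ‖x‖ ^ 2 :=
        norm_sub_sq_real a x
      have hxo2 : ‖a - xo‖ ^ 2 = ‖a‖ ^ 2 - 2 * inner ℝ a xo + ‖xo‖ ^ 2 :=
        norm_sub_sq_real a xo
      have hinner : (inner ℝ u a : ℝ) = inner ℝ a x - inner ℝ a xo := by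
        rw [hu_def, inner_sub_left, real_inner_comm x a, real_inner_comm xo a]
      constructor
      · intro h
        have h2 : ‖a - x‖ ^ 2 = ‖a - xo‖ ^ 2 := by rw [h]
        rw [hx2, hxo2] at h2
        rw [hinner, ht_def]
        linarith
      · intro h
        have h2 : ‖a - x‖ ^ 2 = ‖a - xo‖ ^ 2 := by
          rw [hx2, hxo2]
          rw [hinner, ht_def] at h
          linarith
        have := congrArg Real.sqrt h2
        rwa [Real.sqrt_sq (norm_nonneg _), Real.sqrt_sq (norm_nonneg _)] at this
    have hcont : Continuous fun a : EuclideanSpace ℝ (Fin n) =>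
        (‖a - x‖ - ‖a - xo‖) ^ 2 :=
      (((continuous_id.sub continuous_const).norm).sub
        ((continuous_id.sub continuous_const).norm)).pow 2
    have hint : Integrable (fun a => (‖a - x‖ - ‖a - xo‖) ^ 2) μ := by
      apply (integrable_const (‖x - xo‖ ^ 2)).mono' hcont.aestronglyMeasurable
      filter_upwards with a
      have h1 : |‖a - x‖ - ‖a - xo‖| ≤ ‖x - xo‖ := by
        have := abs_norm_sub_norm_le (a - x) (a - xo)
        have heq : (a - x) - (a - xo) = xo - x := by abel
        rw [heq, show ‖xo - x‖ = ‖x - xo‖ from norm_sub_rev xo x] at this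
        exact this
      rw [Real.norm_eq_abs, abs_of_nonneg (sq_nonneg _)]
      calc (‖a - x‖ - ‖a - xo‖) ^ 2 = |‖a - x‖ - ‖a - xo‖| ^ 2 := (sq_abs _).symm
        _ ≤ ‖x - xo‖ ^ 2 := pow_le_pow_left₀ (abs_nonneg _) h1 2
    have hnn : 0 ≤ ∫ a, (‖a - x‖ - ‖a - xo‖) ^ 2 ∂μ :=
      integral_nonneg fun a => sq_nonneg _
    rcases hnn.lt_or_eq with h | h
    · exact h
    exfalso
    have hz : (fun a => (‖a - x‖ - ‖a - xo‖) ^ 2) =ᵐ[μ] 0 :=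
      (integral_eq_zero_iff_of_nonneg (fun a => sq_nonneg _) hint).mp h.symm
    have hms : MeasurableSet {a : EuclideanSpace ℝ (Fin n) | (inner ℝ u a : ℝ) = t} :=
      (innerSL ℝ u).continuous.measurable (measurableSet_singleton t)
    have hc0 : μ {a : EuclideanSpace ℝ (Fin n) | (inner ℝ u a : ℝ) = t}ᶜ = 0 := by
      have hz' : ∀ᵐ a ∂μ, (inner ℝ u a : ℝ) = t := by
        filter_upwards [hz] with a ha
        exact (key a).mp ha
      exact ae_iff.mp hz'
    have h1 : μ {a : EuclideanSpace ℝ (Fin n) | (inner ℝ u a : ℝ) = t} = 1 :=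
      (prob_compl_eq_zero_iff hms).mp hc0
    exact hplane u hu t h1
  refine ⟨main, fun x hx => ?_⟩
  by_contra hne
  exact absurd hx (ne_of_gt (main x hne))
end

section
/- Let n ≥ 2, let μ be a probability measure on ℝ^n such that no affine hyperplane has μ-measure 1, and let x ∈ ℝ^n with μ({x}) = 0. Then for every nonzero v ∈ ℝ^n, ∫ ⟨v, x − a⟩² / ‖x − a‖² dμ(a) > 0; equivalently, the matrix H(x) = ∫ (x − a)(x − a)^T / ‖x − a‖² dμ(a) is positive definite. -/
open MeasureTheory

/-- If no affine hyperplane has full measure and `μ({x}) = 0`, then for every nonzero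
direction `v`, `∫ ⟨v, x − a⟩²/‖x − a‖² dμ(a) > 0`; i.e. the matrix
`H(x) = ∫ (x−a)(x−a)ᵀ/‖x−a‖² dμ(a)` is positive definite. -/
theorem H_matrix_posdef
    (n : ℕ) (hn : 2 ≤ n)
    (μ : Measure (EuclideanSpace ℝ (Fin n))) [IsProbabilityMeasure μ]
    (hplane : ∀ u : EuclideanSpace ℝ (Fin n), u ≠ 0 → ∀ t : ℝ,
      μ {a | (inner ℝ u a : ℝ) = t} ≠ 1)
    (x : EuclideanSpace ℝ (Fin n)) (hx : μ {x} = 0) :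
    ∀ v : EuclideanSpace ℝ (Fin n), v ≠ 0 →
      0 < ∫ a, (inner ℝ v (x - a) : ℝ) ^ 2 / ‖x - a‖ ^ 2 ∂μ := by
  intro v hv
  set f : EuclideanSpace ℝ (Fin n) → ℝ :=
    fun a => (inner ℝ v (x - a) : ℝ) ^ 2 / ‖x - a‖ ^ 2 with hf
  have hcont1 : Continuous fun a : EuclideanSpace ℝ (Fin n) => (inner ℝ v (x - a) : ℝ) :=
    (continuous_const.inner (continuous_const.sub continuous_id))
  have hcont2 : Continuous fun a : EuclideanSpace ℝ (Fin n) => ‖x - a‖ ^ 2 :=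
    ((continuous_const.sub continuous_id).norm.pow 2)
  have hmeas : Measurable f := ((hcont1.pow 2).measurable).div hcont2.measurable
  have hnonneg : ∀ a, 0 ≤ f a := fun a => div_nonneg (sq_nonneg _) (sq_nonneg _)
  have hbound : ∀ a, ‖f a‖ ≤ ‖v‖ ^ 2 := by
    intro a
    rw [Real.norm_of_nonneg (hnonneg a)]
    by_cases h : x - a = 0
    · simp [hf, h]
    · have hnz : ‖x - a‖ ≠ 0 := norm_ne_zero_iff.mpr h
      have hna : (0:ℝ) < ‖x - a‖ ^ 2 := by positivity
      rw [div_le_iff₀ hna]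
      have := abs_real_inner_le_norm v (x - a)
      calc (inner ℝ v (x - a) : ℝ) ^ 2 = |(inner ℝ v (x - a) : ℝ)| ^ 2 := (sq_abs _).symm
        _ ≤ (‖v‖ * ‖x - a‖) ^ 2 := by
            apply pow_le_pow_left₀ (abs_nonneg _) this
        _ = ‖v‖ ^ 2 * ‖x - a‖ ^ 2 := by ring
  have hint : Integrable f μ := by
    refine Integrable.mono' (integrable_const (‖v‖ ^ 2)) hmeas.aestronglyMeasurable ?_
    exact Filter.Eventually.of_forall hbound
  rw [integral_pos_iff_support_of_nonneg hnonneg hint]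
  set S : Set (EuclideanSpace ℝ (Fin n)) := {a | (inner ℝ v a : ℝ) = inner ℝ v x} with hS
  have hSsub : Sᶜ ⊆ Function.support f := by
    intro a ha
    have hne : (inner ℝ v (x - a) : ℝ) ≠ 0 := by
      rw [inner_sub_right]
      intro h
      exact ha (by simpa [hS, eq_comm] using sub_eq_zero.mp h)
    have hxa : x - a ≠ 0 := by
      intro h; rw [h] at hne; simp at hne
    have : 0 < f a := by
      apply div_pos (by positivity)
      have : ‖x - a‖ ≠ 0 := norm_ne_zero_iff.mpr hxa
      positivity
    exact ne_of_gt this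
  have hSmeas : MeasurableSet S :=
    (isClosed_eq (continuous_const.inner continuous_id) continuous_const).measurableSet
  have hSc : 0 < μ Sᶜ := by
    rcases eq_or_lt_of_le (zero_le (a := μ Sᶜ)) with h | h
    · exfalso
      apply hplane v hv (inner ℝ v x)
      exact (prob_compl_eq_zero_iff hSmeas).mp h.symm
    · exact h
  exact lt_of_lt_of_le hSc (measure_mono hSsub)
end

section
/- Consider sensors at positions a_1, …, a_m ∈ ℝ^n and an object at x^o ∈ ℝ^n, with range measurements d_i = ‖a_i − x^o‖ + r_i, where the r_i are independent real random variables with E[r_i] = 0 and E[r_i²] = σ². Let A be the m×(n+1) matrix whose i-th row is (−2a_i^T, 1), assume A^T A is invertible, let b̄ ∈ ℝ^m have entries b̄_i = d_i² − ‖a_i‖², and let ŷ = (A^T A)^{-1} A^T b̄ (the Noise-Est-Lin estimator). Then E[ŷ] = (x^o, ‖x^o‖² + σ²) ∈ ℝ^{n+1}; in particular, the first n components of ŷ are an unbiased estimator of x^o. -/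
open MeasureTheory ProbabilityTheory Matrix

/-- Unbiasedness of the Noise-Est-Lin estimator: with range measurements
`d_i = ‖a_i − x^o‖ + r_i` (independent noises with mean 0 and variance σ²),
`A` the matrix with rows `(−2a_iᵀ, 1)`, `b̄_i = d_i² − ‖a_i‖²`, and
`ŷ = (AᵀA)⁻¹Aᵀb̄`, one has `E[ŷ] = (x^o, ‖x^o‖² + σ²)`. -/
theorem noise_est_lin_unbiased
    {Ω : Type*} [MeasurableSpace Ω] (μ : Measure Ω) [IsProbabilityMeasure μ]
    (n m : ℕ) (a : Fin m → EuclideanSpace ℝ (Fin n)) (xo : EuclideanSpace ℝ (Fin n))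
    (σ2 : ℝ)
    (r : Fin m → Ω → ℝ) (hmeas : ∀ i, Measurable (r i))
    (hindep : iIndepFun r μ)
    (hL2 : ∀ i, MemLp (r i) 2 μ)
    (hmean : ∀ i, ∫ ω, r i ω ∂μ = 0)
    (hvar : ∀ i, ∫ ω, (r i ω) ^ 2 ∂μ = σ2)
    (d : Fin m → Ω → ℝ) (hd : ∀ i ω, d i ω = ‖a i - xo‖ + r i ω)
    (A : Matrix (Fin m) (Fin (n + 1)) ℝ)
    (hA : ∀ i, A i = Fin.snoc (fun j => -2 * a i j) 1)
    (hInv : IsUnit (Aᵀ * A).det)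
    (bbar : Ω → Fin m → ℝ) (hb : ∀ ω i, bbar ω i = (d i ω) ^ 2 - ‖a i‖ ^ 2)
    (yhat : Ω → Fin (n + 1) → ℝ)
    (hy : ∀ ω, yhat ω = ((Aᵀ * A)⁻¹ * Aᵀ) *ᵥ bbar ω) :
    ∀ j : Fin (n + 1),
      ∫ ω, yhat ω j ∂μ = (Fin.snoc (fun i => xo i) (‖xo‖ ^ 2 + σ2) : Fin (n + 1) → ℝ) j := by
  intro j
  set ystar : Fin (n + 1) → ℝ := Fin.snoc (fun i => xo i) (‖xo‖ ^ 2 + σ2) with hystar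
  -- integrability and mean of bbar
  have hbeq : ∀ i, (fun ω => bbar ω i) =
      fun ω => ‖a i - xo‖ ^ 2 - ‖a i‖ ^ 2 + 2 * ‖a i - xo‖ * r i ω + (r i ω) ^ 2 := by
    intro i; funext ω; rw [hb, hd]; ring
  have hint1 : ∀ i, Integrable (r i) μ := fun i =>
    (hL2 i).integrable (by norm_num)
  have hint2 : ∀ i, Integrable (fun ω => (r i ω) ^ 2) μ := by
    intro i
    simpa [pow_two] using ((hL2 i).integrable_sq)
  have hbint : ∀ i, Integrable (fun ω => bbar ω i) μ := by
    intro i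
    rw [hbeq i]
    exact (((integrable_const _).add ((hint1 i).const_mul _)).add (hint2 i))
  have hbmean : ∀ i, ∫ ω, bbar ω i ∂μ = (A *ᵥ ystar) i := by
    intro i
    have e1 : Integrable (fun ω => ‖a i - xo‖ ^ 2 - ‖a i‖ ^ 2 + 2 * ‖a i - xo‖ * r i ω) μ :=
      (integrable_const _).add ((hint1 i).const_mul _)
    have e0 : Integrable (fun _ : Ω => ‖a i - xo‖ ^ 2 - ‖a i‖ ^ 2) μ := integrable_const _
    have e2 : Integrable (fun ω => 2 * ‖a i - xo‖ * r i ω) μ := (hint1 i).const_mul _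
    have h1 : ∫ ω, bbar ω i ∂μ = ‖a i - xo‖ ^ 2 - ‖a i‖ ^ 2 + σ2 := by
      rw [hbeq i]
      rw [integral_add e1 (hint2 i), integral_add e0 e2,
        integral_const, integral_const_mul, hmean, hvar]
      simp
    have h2 : (A *ᵥ ystar) i = -2 * (inner ℝ (a i) xo : ℝ) + (‖xo‖ ^ 2 + σ2) := by
      simp only [mulVec, dotProduct, hA i]
      rw [Fin.sum_univ_castSucc]
      simp only [Fin.snoc_castSucc, Fin.snoc_last, hystar, Pi.one_apply]
      rw [PiLp.inner_apply]
      simp only [RCLike.inner_apply, conj_trivial]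
      rw [Finset.mul_sum, one_mul]
      congr 1
      exact Finset.sum_congr rfl fun x _ => by ring
    have h3 : ‖a i - xo‖ ^ 2 = ‖a i‖ ^ 2 - 2 * (inner ℝ (a i) xo : ℝ) + ‖xo‖ ^ 2 :=
      norm_sub_sq_real (a i) xo
    rw [h1, h2, h3]; ring
  have hmul : ∀ ω, yhat ω j = ∑ i, ((Aᵀ * A)⁻¹ * Aᵀ) j i * bbar ω i := by
    intro ω; rw [hy]; rfl
  calc ∫ ω, yhat ω j ∂μ = ∫ ω, ∑ i, ((Aᵀ * A)⁻¹ * Aᵀ) j i * bbar ω i ∂μ := by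
        simp only [hmul]
    _ = ∑ i, ∫ ω, ((Aᵀ * A)⁻¹ * Aᵀ) j i * bbar ω i ∂μ :=
        integral_finset_sum _ (fun i _ => (hbint i).const_mul _)
    _ = ∑ i, ((Aᵀ * A)⁻¹ * Aᵀ) j i * (A *ᵥ ystar) i := by
        simp only [integral_const_mul]
        exact Finset.sum_congr rfl fun i _ => by rw [hbmean i]
    _ = ((((Aᵀ * A)⁻¹ * Aᵀ) * A) *ᵥ ystar) j := by
        rw [← mulVec_mulVec]; rfl
    _ = ystar j := by
        rw [Matrix.mul_assoc, Matrix.nonsing_inv_mul _ hInv, one_mulVec]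
end

section
/- Consider sensors at positions a_1, …, a_m ∈ ℝ^n and an object at x^o ∈ ℝ^n, with range measurements d_i = ‖a_i − x^o‖ + r_i, where the r_i are i.i.d. real Gaussian random variables with mean 0 and variance σ² > 0. Let A be the m×(n+1) matrix whose i-th row is (−2a_i^T, 1), assume A^T A is invertible, let b̄ ∈ ℝ^m have entries b̄_i = d_i² − ‖a_i‖², let ŷ = (A^T A)^{-1} A^T b̄, and define the noise-variance estimate σ̂² = [ŷ]_{n+1} − ‖[ŷ]_{1:n}‖². Then, with Ā = (A^T A)^{-1} A^T, the bias of σ̂² satisfies E[σ̂² − σ²] = −∑_{i=1}^n ∑_{j=1}^m Ā_{ij}² (4‖a_j − x^o‖²σ² + 2σ⁴). -/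
open MeasureTheory ProbabilityTheory Matrix

section AuxLemmas
open Real Filter Set

lemma my_integrable_pow_mul_exp {b : ℝ} (hb : 0 < b) (k : ℕ) :
    Integrable (fun x : ℝ => x ^ k * Real.exp (-b * x ^ 2)) := by
  have h := integrable_rpow_mul_exp_neg_mul_sq hb (s := (k : ℝ))
    (lt_of_lt_of_le neg_one_lt_zero (Nat.cast_nonneg k))
  simpa [Real.rpow_natCast] using h

lemma my_tendsto_pow_mul_exp {b : ℝ} (hb : 0 < b) (k : ℕ) :
    Tendsto (fun x : ℝ => x ^ k * Real.exp (-b * x ^ 2)) atTop (nhds 0) := by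
  have h := (rpow_mul_exp_neg_mul_sq_isLittleO_exp_neg hb (k : ℝ)).isBigO.trans_tendsto ?_
  · simpa [Real.rpow_natCast] using h
  · have : Tendsto (fun x : ℝ => -(1/2) * x) atTop atBot := by
      exact Tendsto.const_mul_atTop_of_neg (by norm_num) tendsto_id
    exact Real.tendsto_exp_atBot.comp this

lemma my_ibp {b : ℝ} (hb : 0 < b) (k : ℕ) :
    ∫ x in Ioi (0:ℝ), x ^ (k+2) * Real.exp (-b * x ^ 2)
      = (k+1) / (2*b) * ∫ x in Ioi (0:ℝ), x ^ k * Real.exp (-b * x ^ 2) := by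
  set F : ℝ → ℝ := fun x => x ^ (k+1) * Real.exp (-b * x ^ 2) with hF
  set F' : ℝ → ℝ := fun x => (k+1 : ℝ) * (x ^ k * Real.exp (-b * x ^ 2))
      + (-2*b) * (x ^ (k+2) * Real.exp (-b * x ^ 2)) with hF'
  have hderiv : ∀ x ∈ Ici (0:ℝ), HasDerivAt F (F' x) x := by
    intro x _
    have h1 : HasDerivAt (fun x : ℝ => x ^ (k+1)) ((k+1 : ℕ) * x ^ k) x := by
      simpa using hasDerivAt_pow (k+1) x
    have h2 : HasDerivAt (fun x : ℝ => Real.exp (-b * x ^ 2))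
        (Real.exp (-b * x ^ 2) * (-b * (2 * x))) x := by
      have := ((hasDerivAt_pow 2 x).const_mul (-b)).exp
      simpa using this
    have := h1.fun_mul h2
    refine this.congr_deriv ?_
    show _ = (k+1 : ℝ) * (x ^ k * Real.exp (-b * x ^ 2))
      + (-2*b) * (x ^ (k+2) * Real.exp (-b * x ^ 2))
    push_cast
    ring
  have f'int : IntegrableOn F' (Ioi (0:ℝ)) := by
    apply Integrable.integrableOn
    exact ((my_integrable_pow_mul_exp hb k).const_mul _).add
      ((my_integrable_pow_mul_exp hb (k+2)).const_mul _)
  have hlim : Tendsto F atTop (nhds 0) := my_tendsto_pow_mul_exp hb (k+1)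
  have key := integral_Ioi_of_hasDerivAt_of_tendsto' hderiv f'int hlim
  have hF0 : F 0 = 0 := by simp [hF]
  rw [hF0, sub_zero] at key
  have hsplit : ∫ x in Ioi (0:ℝ), F' x
      = (k+1 : ℝ) * (∫ x in Ioi (0:ℝ), x ^ k * Real.exp (-b * x ^ 2))
        + (-2*b) * ∫ x in Ioi (0:ℝ), x ^ (k+2) * Real.exp (-b * x ^ 2) := by
    rw [integral_add ((my_integrable_pow_mul_exp hb k).const_mul _).integrableOn
      ((my_integrable_pow_mul_exp hb (k+2)).const_mul _).integrableOn,
      integral_const_mul, integral_const_mul]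
  rw [key] at hsplit
  have hb' : (2*b) ≠ 0 := by positivity
  field_simp at hsplit ⊢
  linarith

lemma my_J_odd {b : ℝ} (k : ℕ) (hk : Odd k) :
    ∫ x : ℝ, x ^ k * Real.exp (-b * x ^ 2) = 0 := by
  have h := integral_neg_eq_self (fun x : ℝ => x ^ k * Real.exp (-b * x ^ 2)) volume
  simp only [hk.neg_pow, neg_sq, neg_mul] at h
  rw [integral_neg] at h
  simp only [neg_mul]
  linarith

lemma my_J2 {b : ℝ} (hb : 0 < b) :
    ∫ x : ℝ, x ^ 2 * Real.exp (-b * x ^ 2) = √(π/b) / (2*b) := by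
  have h := integral_comp_abs (f := fun x : ℝ => x ^ 2 * Real.exp (-b * x ^ 2))
  simp only [sq_abs] at h
  have i2 := my_ibp hb 0
  norm_num at i2
  simp only [← neg_mul] at i2
  rw [h, i2]
  simp only [pow_zero, one_mul, integral_gaussian_Ioi]
  field_simp

lemma my_J4 {b : ℝ} (hb : 0 < b) :
    ∫ x : ℝ, x ^ 4 * Real.exp (-b * x ^ 2) = 3 * √(π/b) / (4*b^2) := by
  have h := integral_comp_abs (f := fun x : ℝ => x ^ 4 * Real.exp (-b * x ^ 2))
  have h4 : ∀ x : ℝ, |x| ^ 4 * Real.exp (-b * |x| ^ 2) = x ^ 4 * Real.exp (-b * x ^ 2) := by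
    intro x
    rw [sq_abs, show (4:ℕ) = 2*2 from rfl, pow_mul, sq_abs, ← pow_mul]
  simp only [h4] at h
  have i2 := my_ibp hb 0
  have i4 := my_ibp hb 2
  norm_num at i2 i4
  simp only [← neg_mul] at i2 i4
  rw [h, i4, i2]
  simp only [pow_zero, one_mul, integral_gaussian_Ioi]
  field_simp
  ring

lemma my_pdf_eq {v : NNReal} (x : ℝ) :
    gaussianPDFReal 0 v x = (√(2*π*v))⁻¹ * Real.exp (-(2*(v:ℝ))⁻¹ * x^2) := by
  simp only [gaussianPDFReal, sub_zero]
  congr 1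
  rw [neg_div, div_eq_inv_mul, neg_mul]

lemma my_gauss_int {v : NNReal} (hv : v ≠ 0) (g : ℝ → ℝ) :
    ∫ x, g x ∂(gaussianReal 0 v) = ∫ x, gaussianPDFReal 0 v x * g x := by
  rw [gaussianReal_of_var_ne_zero _ hv]
  have h : (gaussianPDF 0 v) = fun x => ((gaussianPDFReal 0 v x).toNNReal : ENNReal) := rfl
  have hf : Measurable fun x => (gaussianPDFReal 0 v x).toNNReal :=
    measurable_real_toNNReal.comp (measurable_gaussianPDFReal 0 v)
  rw [h, integral_withDensity_eq_integral_smul hf]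
  congr 1; funext x
  rw [NNReal.smul_def, Real.coe_toNNReal _ (gaussianPDFReal_nonneg 0 v x), smul_eq_mul]

lemma my_gauss_integrable {v : NNReal} (hv : v ≠ 0) (k : ℕ) :
    Integrable (fun x : ℝ => x ^ k) (gaussianReal 0 v) := by
  have hv' : (0:ℝ) < v := by positivity
  have hb : (0:ℝ) < (2*(v:ℝ))⁻¹ := by positivity
  rw [gaussianReal_of_var_ne_zero _ hv]
  have h : (gaussianPDF 0 v) = fun x => ((gaussianPDFReal 0 v x).toNNReal : ENNReal) := rfl
  have hf : Measurable fun x => (gaussianPDFReal 0 v x).toNNReal :=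
    measurable_real_toNNReal.comp (measurable_gaussianPDFReal 0 v)
  rw [h, integrable_withDensity_iff_integrable_smul hf]
  have := (my_integrable_pow_mul_exp hb k).const_mul ((√(2*π*v))⁻¹)
  apply this.congr
  filter_upwards with x
  rw [NNReal.smul_def, Real.coe_toNNReal _ (gaussianPDFReal_nonneg 0 v x), smul_eq_mul,
    my_pdf_eq]
  ring

lemma my_gauss_pow_int {v : NNReal} (hv : v ≠ 0) (k : ℕ) :
    ∫ x, x ^ k ∂(gaussianReal 0 v)
      = (√(2*π*v))⁻¹ * ∫ x : ℝ, x ^ k * Real.exp (-(2*(v:ℝ))⁻¹ * x ^ 2) := by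
  rw [my_gauss_int hv]
  have hpt : ∀ x : ℝ, gaussianPDFReal 0 v x * x ^ k
      = (√(2*π*v))⁻¹ * (x ^ k * Real.exp (-(2*(v:ℝ))⁻¹ * x ^ 2)) := by
    intro x; rw [my_pdf_eq]; ring
  simp only [hpt]
  rw [integral_const_mul]

lemma my_gauss_m1 {v : NNReal} (hv : v ≠ 0) : ∫ x, x ∂(gaussianReal 0 v) = 0 := by
  have := my_gauss_pow_int hv 1
  rw [my_J_odd 1 ⟨0, by ring⟩, mul_zero] at this
  simpa using this

lemma my_gauss_m3 {v : NNReal} (hv : v ≠ 0) : ∫ x, x ^ 3 ∂(gaussianReal 0 v) = 0 := by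
  have := my_gauss_pow_int hv 3
  rw [my_J_odd 3 ⟨1, by ring⟩, mul_zero] at this
  simpa using this

lemma my_gauss_m2 {v : NNReal} (hv : v ≠ 0) : ∫ x, x ^ 2 ∂(gaussianReal 0 v) = v := by
  have hv' : (0:ℝ) < v := by positivity
  have hb : (0:ℝ) < (2*(v:ℝ))⁻¹ := by positivity
  have hX : π / ((2*(v:ℝ))⁻¹) = 2*π*(v:ℝ) := by field_simp
  have hs : √(2*π*(v:ℝ)) ≠ 0 := ne_of_gt (Real.sqrt_pos.mpr (by positivity))
  rw [my_gauss_pow_int hv 2, my_J2 hb, hX]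
  field_simp

lemma my_gauss_m4 {v : NNReal} (hv : v ≠ 0) :
    ∫ x, x ^ 4 ∂(gaussianReal 0 v) = 3 * (v:ℝ) ^ 2 := by
  have hv' : (0:ℝ) < v := by positivity
  have hb : (0:ℝ) < (2*(v:ℝ))⁻¹ := by positivity
  have hX : π / ((2*(v:ℝ))⁻¹) = 2*π*(v:ℝ) := by field_simp
  have hs : √(2*π*(v:ℝ)) ≠ 0 := ne_of_gt (Real.sqrt_pos.mpr (by positivity))
  rw [my_gauss_pow_int hv 4, my_J4 hb, hX]
  field_simp
  ring

section RV
variable {Ω : Type*} [MeasurableSpace Ω] {μ : Measure Ω} {v : NNReal} {X : Ω → ℝ}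

lemma my_X_pow_int (hv : v ≠ 0) (hX : Measurable X)
    (hlaw : μ.map X = gaussianReal 0 v) (k : ℕ) :
    Integrable (fun ω => X ω ^ k) μ := by
  have h := my_gauss_integrable hv k
  rw [← hlaw] at h
  have := (integrable_map_measure (measurable_id.pow_const k).aestronglyMeasurable
    hX.aemeasurable).mp h
  exact this

lemma my_X_pow_moment (hX : Measurable X)
    (hlaw : μ.map X = gaussianReal 0 v) (k : ℕ) :
    ∫ ω, X ω ^ k ∂μ = ∫ x, x ^ k ∂(gaussianReal 0 v) := by
  rw [← hlaw]
  exact (integral_map hX.aemeasurable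
    (measurable_id.pow_const k).aestronglyMeasurable).symm

lemma my_eps_int (hv : v ≠ 0) (hX : Measurable X)
    (hlaw : μ.map X = gaussianReal 0 v) (c : ℝ) :
    Integrable (fun ω => 2 * c * X ω + X ω ^ 2) μ := by
  have h1 := (my_X_pow_int hv hX hlaw 1).const_mul (2*c)
  have h2 := my_X_pow_int hv hX hlaw 2
  have h1' : Integrable (fun ω => 2 * c * X ω) μ := by simpa [pow_one] using h1
  exact h1'.add h2

lemma my_eps_mean (hv : v ≠ 0) (hX : Measurable X)
    (hlaw : μ.map X = gaussianReal 0 v) (c : ℝ) :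
    ∫ ω, (2 * c * X ω + X ω ^ 2) ∂μ = (v:ℝ) := by
  have h1 : Integrable (fun ω => 2 * c * X ω) μ := by
    simpa [pow_one] using (my_X_pow_int hv hX hlaw 1).const_mul (2*c)
  have h2 := my_X_pow_int hv hX hlaw 2
  have hadd : ∫ ω, (2 * c * X ω + X ω ^ 2) ∂μ
      = (∫ ω, 2 * c * X ω ∂μ) + ∫ ω, X ω ^ 2 ∂μ := integral_add h1 h2
  rw [hadd, integral_const_mul]
  have m1 : ∫ ω, X ω ∂μ = 0 := by
    have := (my_X_pow_moment hX hlaw 1)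
    simp only [pow_one] at this
    rw [this, my_gauss_m1 hv]
  have m2 : ∫ ω, X ω ^ 2 ∂μ = v := (my_X_pow_moment hX hlaw 2).trans (my_gauss_m2 hv)
  rw [m1, m2]; ring

lemma my_eps_sq_int (hv : v ≠ 0) (hX : Measurable X)
    (hlaw : μ.map X = gaussianReal 0 v) (c : ℝ) :
    Integrable (fun ω => (2 * c * X ω + X ω ^ 2) * (2 * c * X ω + X ω ^ 2)) μ := by
  have h2 := (my_X_pow_int hv hX hlaw 2).const_mul (4*c^2)
  have h3 := (my_X_pow_int hv hX hlaw 3).const_mul (4*c)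
  have h4 := my_X_pow_int hv hX hlaw 4
  apply ((h2.add h3).add h4).congr
  filter_upwards with ω
  simp only [Pi.add_apply]
  ring

lemma my_eps_sq_mean (hv : v ≠ 0) (hX : Measurable X)
    (hlaw : μ.map X = gaussianReal 0 v) (c : ℝ) :
    ∫ ω, (2 * c * X ω + X ω ^ 2) * (2 * c * X ω + X ω ^ 2) ∂μ
      = 4 * c ^ 2 * v + 3 * (v:ℝ) ^ 2 := by
  have hpt : ∀ ω, (2 * c * X ω + X ω ^ 2) * (2 * c * X ω + X ω ^ 2)
      = 4 * c ^ 2 * X ω ^ 2 + 4 * c * X ω ^ 3 + X ω ^ 4 := fun ω => by ring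
  simp only [hpt]
  have h2 := (my_X_pow_int hv hX hlaw 2).const_mul (4*c^2)
  have h3 := (my_X_pow_int hv hX hlaw 3).const_mul (4*c)
  have h4 := my_X_pow_int hv hX hlaw 4
  have hadd : ∫ ω, (4 * c ^ 2 * X ω ^ 2 + 4 * c * X ω ^ 3 + X ω ^ 4) ∂μ
      = ((∫ ω, 4 * c ^ 2 * X ω ^ 2 ∂μ) + ∫ ω, 4 * c * X ω ^ 3 ∂μ) + ∫ ω, X ω ^ 4 ∂μ := by
    have e1 : (∫ ω, (4 * c ^ 2 * X ω ^ 2 + 4 * c * X ω ^ 3 + X ω ^ 4) ∂μ)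
        = (∫ ω, (4 * c ^ 2 * X ω ^ 2 + 4 * c * X ω ^ 3) ∂μ) + ∫ ω, X ω ^ 4 ∂μ :=
      integral_add (h2.add h3) h4
    have e2 : (∫ ω, (4 * c ^ 2 * X ω ^ 2 + 4 * c * X ω ^ 3) ∂μ)
        = (∫ ω, 4 * c ^ 2 * X ω ^ 2 ∂μ) + ∫ ω, 4 * c * X ω ^ 3 ∂μ := integral_add h2 h3
    rw [e1, e2]
  rw [hadd, integral_const_mul, integral_const_mul,
    (my_X_pow_moment hX hlaw 2).trans (my_gauss_m2 hv),
    (my_X_pow_moment hX hlaw 3).trans (my_gauss_m3 hv),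
    (my_X_pow_moment hX hlaw 4).trans (my_gauss_m4 hv)]
  ring

end RV

end AuxLemmas

/-- Bias of the Noise-Est-Lin variance estimate: with `d_i = ‖a_i − x^o‖ + r_i`
(i.i.d. Gaussian noises of mean 0 and variance σ² > 0), `A` the matrix with rows
`(−2a_iᵀ, 1)`, `b̄_i = d_i² − ‖a_i‖²`, `ŷ = (AᵀA)⁻¹Aᵀb̄` and
`σ̂² = [ŷ]_{n+1} − ‖[ŷ]_{1:n}‖²`, one has, with `Ā = (AᵀA)⁻¹Aᵀ`,
`E[σ̂² − σ²] = −∑_{i=1}^n ∑_{j=1}^m Ā_{ij}² (4‖a_j − x^o‖²σ² + 2σ⁴)`. -/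
theorem noise_est_lin_variance_bias
    {Ω : Type*} [MeasurableSpace Ω] (μ : Measure Ω) [IsProbabilityMeasure μ]
    (n m : ℕ) (a : Fin m → EuclideanSpace ℝ (Fin n)) (xo : EuclideanSpace ℝ (Fin n))
    (v : NNReal) (hv : v ≠ 0)
    (r : Fin m → Ω → ℝ) (hmeas : ∀ i, Measurable (r i))
    (hindep : iIndepFun r μ)
    (hlaw : ∀ i, μ.map (r i) = gaussianReal 0 v)
    (d : Fin m → Ω → ℝ) (hd : ∀ i ω, d i ω = ‖a i - xo‖ + r i ω)
    (A : Matrix (Fin m) (Fin (n + 1)) ℝ)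
    (hA : ∀ i, A i = Fin.snoc (fun j => -2 * a i j) 1)
    (hInv : IsUnit (Aᵀ * A).det)
    (bbar : Ω → Fin m → ℝ) (hb : ∀ ω i, bbar ω i = (d i ω) ^ 2 - ‖a i‖ ^ 2)
    (yhat : Ω → Fin (n + 1) → ℝ)
    (hy : ∀ ω, yhat ω = ((Aᵀ * A)⁻¹ * Aᵀ) *ᵥ bbar ω)
    (σhat2 : Ω → ℝ)
    (hσhat2 : ∀ ω, σhat2 ω
      = yhat ω (Fin.last n) - ∑ i : Fin n, (yhat ω i.castSucc) ^ 2) :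
    ∫ ω, (σhat2 ω - (v : ℝ)) ∂μ
      = -∑ i : Fin n, ∑ j : Fin m,
          (((Aᵀ * A)⁻¹ * Aᵀ) i.castSucc j) ^ 2
            * (4 * ‖a j - xo‖ ^ 2 * (v : ℝ) + 2 * (v : ℝ) ^ 2) := by
  classical
  set Abar : Matrix (Fin (n+1)) (Fin m) ℝ := (Aᵀ * A)⁻¹ * Aᵀ with hAbar
  set ε : Fin m → Ω → ℝ := fun j ω => 2 * ‖a j - xo‖ * r j ω + (r j ω) ^ 2 with hεdef
  have hAbarA : Abar * A = 1 := by
    rw [hAbar, Matrix.mul_assoc]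
    exact Matrix.nonsing_inv_mul _ hInv
  have hnorm : ∀ x : EuclideanSpace ℝ (Fin n), ‖x‖ ^ 2 = ∑ j, (x j) ^ 2 := by
    intro x
    rw [EuclideanSpace.norm_eq, Real.sq_sqrt (by positivity)]
    simp [sq_abs]
  -- row sums of Abar
  have hrowsum : ∀ k : Fin (n+1), ∑ j, Abar k j
      = (Fin.snoc (fun _ : Fin n => (0:ℝ)) 1 : Fin (n+1) → ℝ) k := by
    intro k
    have h1 : (fun _ : Fin m => (1:ℝ))
        = A *ᵥ (Fin.snoc (fun _ : Fin n => (0:ℝ)) 1 : Fin (n+1) → ℝ) := by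
      funext i
      simp [Matrix.mulVec, dotProduct, hA i, Fin.sum_univ_castSucc]
    have h2 : ∑ j, Abar k j = (Abar *ᵥ (fun _ : Fin m => (1:ℝ))) k := by
      simp [Matrix.mulVec, dotProduct]
    rw [h2, h1, Matrix.mulVec_mulVec, hAbarA, Matrix.one_mulVec]
  have hrow0 : ∀ i : Fin n, ∑ j, Abar i.castSucc j = 0 := by
    intro i; rw [hrowsum]; simp
  have hrow1 : ∑ j, Abar (Fin.last n) j = 1 := by
    rw [hrowsum]; simp
  -- representation of yhat
  set y0 : Fin (n+1) → ℝ :=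
    Fin.snoc (fun j : Fin n => xo j) (∑ j : Fin n, (xo j) ^ 2) with hy0
  have hbb : ∀ ω, bbar ω = A *ᵥ y0 + fun j => ε j ω := by
    intro ω; funext i
    have hAv : (A *ᵥ y0) i
        = ∑ j : Fin n, (-2 * a i j) * (xo j) + ∑ j : Fin n, (xo j) ^ 2 := by
      simp [Matrix.mulVec, dotProduct, hA i, Fin.sum_univ_castSucc, hy0]
    have e1 : ‖a i - xo‖ ^ 2 = ∑ j, (a i j - xo j) ^ 2 := by
      rw [hnorm (a i - xo)]
      exact Finset.sum_congr rfl fun j _ => by simp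
    have e2 : ‖a i‖ ^ 2 = ∑ j, (a i j) ^ 2 := hnorm _
    rw [hb ω i, hd i ω, Pi.add_apply, hAv]
    have e3 : (‖a i - xo‖ + r i ω) ^ 2
        = ‖a i - xo‖ ^ 2 + (2 * ‖a i - xo‖ * r i ω + (r i ω) ^ 2) := by ring
    rw [e3, e1, e2]
    have e4 : ∑ j, (a i j - xo j) ^ 2
        = ∑ j, ((a i j) ^ 2 + ((-2 * a i j) * xo j + (xo j) ^ 2)) :=
      Finset.sum_congr rfl fun j _ => by ring
    rw [e4, Finset.sum_add_distrib, Finset.sum_add_distrib]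
    simp only [hεdef]
    ring
  have hyω : ∀ ω (k : Fin (n+1)), yhat ω k = y0 k + ∑ j, Abar k j * ε j ω := by
    intro ω k
    have : yhat ω = y0 + Abar *ᵥ (fun j => ε j ω) := by
      rw [hy ω, hbb ω, Matrix.mulVec_add, Matrix.mulVec_mulVec, hAbarA, Matrix.one_mulVec]
    rw [this, Pi.add_apply]
    congr 1
  -- pointwise identity for the integrand
  have hσeq : ∀ ω, σhat2 ω - (v:ℝ)
      = ((∑ j, Abar (Fin.last n) j * ε j ω) - (v:ℝ)
        - ∑ i : Fin n, 2 * xo i * ∑ j, Abar i.castSucc j * ε j ω)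
        - ∑ i : Fin n, (∑ j, Abar i.castSucc j * ε j ω)
            * (∑ j, Abar i.castSucc j * ε j ω) := by
    intro ω
    rw [hσhat2 ω, hyω ω (Fin.last n)]
    have hcs : ∀ i : Fin n, (yhat ω i.castSucc) ^ 2
        = (xo i) ^ 2 + 2 * xo i * (∑ j, Abar i.castSucc j * ε j ω)
          + (∑ j, Abar i.castSucc j * ε j ω) * (∑ j, Abar i.castSucc j * ε j ω) := by
      intro i
      rw [hyω ω i.castSucc]
      have : y0 i.castSucc = xo i := by simp [hy0]
      rw [this]; ring
    rw [Finset.sum_congr rfl fun i _ => hcs i, Finset.sum_add_distrib,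
      Finset.sum_add_distrib]
    have hlast : y0 (Fin.last n) = ∑ j : Fin n, (xo j) ^ 2 := by simp [hy0]
    rw [hlast]
    ring
  -- integrability and means of ε
  have heps_meas : ∀ j, Measurable (ε j) := by
    intro j
    exact ((hmeas j).const_mul _).add ((hmeas j).pow_const 2)
  have heps_int : ∀ j, Integrable (ε j) μ := fun j =>
    my_eps_int hv (hmeas j) (hlaw j) _
  have heps_mean : ∀ j, ∫ ω, ε j ω ∂μ = (v:ℝ) := fun j =>
    my_eps_mean hv (hmeas j) (hlaw j) _
  have hprod_int : ∀ j l, Integrable (fun ω => ε j ω * ε l ω) μ := by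
    intro j l
    rcases eq_or_ne j l with rfl | hne
    · exact my_eps_sq_int hv (hmeas j) (hlaw j) _
    · have hind : IndepFun (ε j) (ε l) μ := by
        have := (hindep.indepFun hne).comp
          (φ := fun t : ℝ => 2 * ‖a j - xo‖ * t + t ^ 2)
          (ψ := fun t : ℝ => 2 * ‖a l - xo‖ * t + t ^ 2)
          ((measurable_id.const_mul _).add (measurable_id.pow_const 2))
          ((measurable_id.const_mul _).add (measurable_id.pow_const 2))
        exact this
      exact hind.integrable_mul (heps_int j) (heps_int l)
  have hprod_mean : ∀ j l, ∫ ω, ε j ω * ε l ω ∂μ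
      = if j = l then 4 * ‖a j - xo‖ ^ 2 * (v:ℝ) + 3 * (v:ℝ) ^ 2 else (v:ℝ) ^ 2 := by
    intro j l
    rcases eq_or_ne j l with rfl | hne
    · rw [if_pos rfl]
      exact my_eps_sq_mean hv (hmeas j) (hlaw j) _
    · rw [if_neg hne]
      have hind : IndepFun (ε j) (ε l) μ := by
        have := (hindep.indepFun hne).comp
          (φ := fun t : ℝ => 2 * ‖a j - xo‖ * t + t ^ 2)
          (ψ := fun t : ℝ => 2 * ‖a l - xo‖ * t + t ^ 2)
          ((measurable_id.const_mul _).add (measurable_id.pow_const 2))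
          ((measurable_id.const_mul _).add (measurable_id.pow_const 2))
        exact this
      have := hind.integral_mul_eq_mul_integral (heps_int j).aestronglyMeasurable
          (heps_int l).aestronglyMeasurable
      rw [heps_mean j, heps_mean l] at this
      have h2 : ∫ ω, ε j ω * ε l ω ∂μ = ∫ ω, (ε j * ε l) ω ∂μ := rfl
      rw [h2, this]; ring
  -- S integrals
  have hS_int : ∀ k : Fin (n+1), Integrable (fun ω => ∑ j, Abar k j * ε j ω) μ :=
    fun k => integrable_finset_sum _ fun j _ => (heps_int j).const_mul _
  have hS_mean : ∀ k : Fin (n+1),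
      ∫ ω, (∑ j, Abar k j * ε j ω) ∂μ = (∑ j, Abar k j) * (v:ℝ) := by
    intro k
    rw [integral_finset_sum _ fun j _ => (heps_int j).const_mul _]
    rw [Finset.sum_congr rfl fun j _ => by rw [integral_const_mul, heps_mean j]]
    rw [← Finset.sum_mul]
  have hS2_ptw : ∀ (i : Fin n) ω,
      (∑ j, Abar i.castSucc j * ε j ω) * (∑ j, Abar i.castSucc j * ε j ω)
        = ∑ j, ∑ l, (Abar i.castSucc j * Abar i.castSucc l) * (ε j ω * ε l ω) := by
    intro i ω
    rw [Finset.sum_mul_sum]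
    exact Finset.sum_congr rfl fun j _ => Finset.sum_congr rfl fun l _ => by ring
  have hS2_int : ∀ i : Fin n, Integrable
      (fun ω => (∑ j, Abar i.castSucc j * ε j ω) * (∑ j, Abar i.castSucc j * ε j ω)) μ := by
    intro i
    have : Integrable (fun ω => ∑ j, ∑ l,
        (Abar i.castSucc j * Abar i.castSucc l) * (ε j ω * ε l ω)) μ :=
      integrable_finset_sum _ fun j _ =>
        integrable_finset_sum _ fun l _ => (hprod_int j l).const_mul _
    apply this.congr
    filter_upwards with ω
    exact (hS2_ptw i ω).symm
  have hS2_mean : ∀ i : Fin n,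
      ∫ ω, (∑ j, Abar i.castSucc j * ε j ω) * (∑ j, Abar i.castSucc j * ε j ω) ∂μ
        = ∑ j, (Abar i.castSucc j) ^ 2
            * (4 * ‖a j - xo‖ ^ 2 * (v:ℝ) + 2 * (v:ℝ) ^ 2) := by
    intro i
    have h1 : ∫ ω, (∑ j, Abar i.castSucc j * ε j ω) * (∑ j, Abar i.castSucc j * ε j ω) ∂μ
        = ∑ j, ∑ l, (Abar i.castSucc j * Abar i.castSucc l) * ∫ ω, ε j ω * ε l ω ∂μ := by
      have e : (fun ω => (∑ j, Abar i.castSucc j * ε j ω) * (∑ j, Abar i.castSucc j * ε j ω))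
          = fun ω => ∑ j, ∑ l, (Abar i.castSucc j * Abar i.castSucc l) * (ε j ω * ε l ω) :=
        funext fun ω => hS2_ptw i ω
      rw [e, integral_finset_sum _ fun j _ =>
        integrable_finset_sum _ fun l _ => (hprod_int j l).const_mul _]
      exact Finset.sum_congr rfl fun j _ => by
        rw [integral_finset_sum _ fun l _ => (hprod_int j l).const_mul _]
        exact Finset.sum_congr rfl fun l _ => by rw [integral_const_mul]
    rw [h1]
    have h2 : ∀ j, ∑ l, (Abar i.castSucc j * Abar i.castSucc l) * ∫ ω, ε j ω * ε l ω ∂μ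
        = Abar i.castSucc j * ((∑ l, Abar i.castSucc l) * (v:ℝ)^2)
          + (Abar i.castSucc j) ^ 2 * (4 * ‖a j - xo‖ ^ 2 * (v:ℝ) + 2 * (v:ℝ) ^ 2) := by
      intro j
      have e : ∀ l, (Abar i.castSucc j * Abar i.castSucc l) * ∫ ω, ε j ω * ε l ω ∂μ
          = Abar i.castSucc j * Abar i.castSucc l * (v:ℝ)^2
            + (if l = j then (Abar i.castSucc j) ^ 2
                * (4 * ‖a j - xo‖ ^ 2 * (v:ℝ) + 2 * (v:ℝ) ^ 2) else 0) := by
        intro l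
        rcases eq_or_ne l j with rfl | hne
        · rw [hprod_mean, if_pos rfl, if_pos rfl]; ring
        · rw [hprod_mean, if_neg (Ne.symm hne), if_neg hne]; ring
      rw [Finset.sum_congr rfl fun l _ => e l, Finset.sum_add_distrib,
        Finset.sum_ite_eq' Finset.univ j, if_pos (Finset.mem_univ j)]
      have hsum : Abar i.castSucc j * ((∑ l, Abar i.castSucc l) * (v:ℝ)^2)
          = ∑ x, Abar i.castSucc j * Abar i.castSucc x * (v:ℝ)^2 := by
        rw [Finset.sum_mul, Finset.mul_sum]
        exact Finset.sum_congr rfl fun l _ => by ring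
      rw [hsum]
    rw [Finset.sum_congr rfl fun j _ => h2 j, Finset.sum_add_distrib, hrow0 i]
    simp
  -- final assembly
  have hT_int : Integrable
      (fun ω => ∑ i : Fin n, 2 * xo i * ∑ j, Abar i.castSucc j * ε j ω) μ :=
    integrable_finset_sum _ fun i _ => (hS_int i.castSucc).const_mul _
  have hU_int : Integrable
      (fun ω => ∑ i : Fin n, (∑ j, Abar i.castSucc j * ε j ω)
        * (∑ j, Abar i.castSucc j * ε j ω)) μ :=
    integrable_finset_sum _ fun i _ => hS2_int i
  have hrepr : (fun ω => σhat2 ω - (v:ℝ))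
      = fun ω => ((∑ j, Abar (Fin.last n) j * ε j ω) - (v:ℝ)
        - ∑ i : Fin n, 2 * xo i * ∑ j, Abar i.castSucc j * ε j ω)
        - ∑ i : Fin n, (∑ j, Abar i.castSucc j * ε j ω)
            * (∑ j, Abar i.castSucc j * ε j ω) := funext hσeq
  rw [hrepr]
  have hconst : Integrable (fun _ : Ω => (v:ℝ)) μ := integrable_const _
  have hin1 : Integrable (fun ω => (∑ j, Abar (Fin.last n) j * ε j ω) - (v:ℝ)) μ :=
    (hS_int _).sub hconst
  have hin2 : Integrable (fun ω => ((∑ j, Abar (Fin.last n) j * ε j ω) - (v:ℝ))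
      - ∑ i : Fin n, 2 * xo i * ∑ j, Abar i.castSucc j * ε j ω) μ := hin1.sub hT_int
  rw [integral_sub hin2 hU_int, integral_sub hin1 hT_int, integral_sub (hS_int _) hconst]
  rw [hS_mean, hrow1, one_mul, integral_const]
  have hTmean : ∫ ω, (∑ i : Fin n, 2 * xo i * ∑ j, Abar i.castSucc j * ε j ω) ∂μ = 0 := by
    rw [integral_finset_sum _ fun i _ => (hS_int i.castSucc).const_mul _]
    refine Finset.sum_eq_zero fun i _ => ?_
    rw [integral_const_mul, hS_mean, hrow0 i, zero_mul, mul_zero]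
  have hUmean : ∫ ω, (∑ i : Fin n, (∑ j, Abar i.castSucc j * ε j ω)
      * (∑ j, Abar i.castSucc j * ε j ω)) ∂μ
      = ∑ i : Fin n, ∑ j, (Abar i.castSucc j) ^ 2
          * (4 * ‖a j - xo‖ ^ 2 * (v:ℝ) + 2 * (v:ℝ) ^ 2) := by
    rw [integral_finset_sum _ fun i _ => hS2_int i]
    exact Finset.sum_congr rfl fun i _ => hS2_mean i
  rw [hTmean, hUmean]
  simp [measure_univ]
end

section
/- Let A be an m×(n+1) real matrix whose last column is the all-ones vector and such that A^T A is invertible, let b̄ ∈ ℝ^m, σ² ∈ ℝ, and b = b̄ − σ²·1_m, where 1_m is the all-ones vector in ℝ^m. Then (A^T A)^{-1} A^T b = (A^T A)^{-1} A^T b̄ − σ²·e_{n+1}, where e_{n+1} ∈ ℝ^{n+1} is the (n+1)-th standard basis vector. In particular, the first n components of (A^T A)^{-1} A^T b and of (A^T A)^{-1} A^T b̄ coincide (the Bias-Eli-Lin and Noise-Est-Lin position estimates are equal). -/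
open Matrix

/-- If the last column of `A` is all ones and `b = b̄ − σ²·1_m`, then
`(AᵀA)⁻¹Aᵀb = (AᵀA)⁻¹Aᵀb̄ − σ²·e_{n+1}`; in particular the first `n` components of
the two estimates coincide (Bias-Eli-Lin and Noise-Est-Lin position estimates agree). -/
theorem bias_eli_lin_eq_noise_est_lin
    (n m : ℕ) (A : Matrix (Fin m) (Fin (n + 1)) ℝ)
    (hcol : ∀ i, A i (Fin.last n) = 1)
    (hInv : IsUnit (Aᵀ * A).det)
    (bbar : Fin m → ℝ) (s : ℝ) (b : Fin m → ℝ)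
    (hb : b = bbar - fun _ => s) :
    ((Aᵀ * A)⁻¹ * Aᵀ) *ᵥ b
        = (((Aᵀ * A)⁻¹ * Aᵀ) *ᵥ bbar) - s • (Pi.single (Fin.last n) 1 : Fin (n + 1) → ℝ) ∧
    ∀ i : Fin n,
      (((Aᵀ * A)⁻¹ * Aᵀ) *ᵥ b) i.castSucc
        = (((Aᵀ * A)⁻¹ * Aᵀ) *ᵥ bbar) i.castSucc := by
  have h1 : A *ᵥ (Pi.single (Fin.last n) 1 : Fin (n + 1) → ℝ) = fun _ => 1 := by
    funext i
    simp [mulVec_single, hcol]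
  have key : ((Aᵀ * A)⁻¹ * Aᵀ) *ᵥ (fun _ => s : Fin m → ℝ)
      = s • (Pi.single (Fin.last n) 1 : Fin (n + 1) → ℝ) := by
    have h2 : (fun _ => s : Fin m → ℝ) = A *ᵥ (s • (Pi.single (Fin.last n) 1 : Fin (n + 1) → ℝ)) := by
      rw [mulVec_smul, h1]
      funext i; simp
    rw [h2, mulVec_mulVec, Matrix.mul_assoc, nonsing_inv_mul _ hInv, one_mulVec]
  have main : ((Aᵀ * A)⁻¹ * Aᵀ) *ᵥ b
      = (((Aᵀ * A)⁻¹ * Aᵀ) *ᵥ bbar) - s • (Pi.single (Fin.last n) 1 : Fin (n + 1) → ℝ) := by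
    rw [hb, mulVec_sub, key]
  refine ⟨main, fun i => ?_⟩
  rw [main]
  simp [Pi.single_eq_of_ne (Fin.castSucc_lt_last i).ne]
end

section
/- Let n ≥ 1, let M be a symmetric positive semidefinite (n+1)×(n+1) real matrix, let v ∈ ℝ^{n+1} be a nonzero vector with M v = 0, let w ∈ ℝ^{n+1}, let D = diag(I_n, 0) (the (n+1)×(n+1) matrix with top-left block I_n and all other entries 0), and let g = (0_{n×1}, −1/2) ∈ ℝ^{n+1}. Define q(y) = y^T D y + 2 g^T y and the feasible set F = {y ∈ ℝ^{n+1} : M y = w and q(y) ≤ 0}. If y' ∈ F satisfies v^T y' ≤ v^T y for all y ∈ F (i.e., y' is a global minimizer of v^T y over F), then q(y') = 0. -/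
open Matrix

/-- In the "hard case" convex program: if `M ⪰ 0`, `v ≠ 0` with `Mv = 0`, and `y'`
minimizes `vᵀy` over the feasible set `{y : My = w, q(y) ≤ 0}` where
`q(y) = yᵀDy + 2gᵀy` with `D = diag(I_n, 0)` and `g = (0, −1/2)`, then `q(y') = 0`,
i.e. the quadratic constraint is active at any minimizer. -/
theorem hard_case_constraint_active
    (n : ℕ) (hn : 1 ≤ n)
    (M : Matrix (Fin (n + 1)) (Fin (n + 1)) ℝ) (hM : M.PosSemidef)
    (v : Fin (n + 1) → ℝ) (hv : v ≠ 0) (hMv : M *ᵥ v = 0)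
    (w : Fin (n + 1) → ℝ)
    (D : Matrix (Fin (n + 1)) (Fin (n + 1)) ℝ)
    (hD : D = Matrix.diagonal (Fin.snoc (fun _ : Fin n => (1 : ℝ)) 0))
    (g : Fin (n + 1) → ℝ)
    (hg : g = Fin.snoc (fun _ : Fin n => (0 : ℝ)) (-(1 / 2)))
    (q : (Fin (n + 1) → ℝ) → ℝ)
    (hq : ∀ y, q y = y ⬝ᵥ (D *ᵥ y) + 2 * (g ⬝ᵥ y))
    (F : Set (Fin (n + 1) → ℝ))
    (hF : F = {y | M *ᵥ y = w ∧ q y ≤ 0})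
    (y' : Fin (n + 1) → ℝ) (hy' : y' ∈ F)
    (hmin : ∀ y ∈ F, v ⬝ᵥ y' ≤ v ⬝ᵥ y) :
    q y' = 0 := by
  subst hF
  obtain ⟨hMy', hqle⟩ := hy'
  rcases lt_or_eq_of_le hqle with hlt | heq
  · -- derive a contradiction
    exfalso
    -- continuity of t ↦ q (y' - t • v)
    have hc : Continuous fun t : ℝ => q (y' - t • v) := by
      have : (fun t : ℝ => q (y' - t • v)) =
          fun t : ℝ => (y' - t • v) ⬝ᵥ (D *ᵥ (y' - t • v)) + 2 * (g ⬝ᵥ (y' - t • v)) := by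
        funext t; rw [hq]
      rw [this]
      simp only [dotProduct, mulVec]
      fun_prop
    have h0 : q (y' - (0:ℝ) • v) < 0 := by simpa using hlt
    have hev : ∀ᶠ t in nhds (0:ℝ), q (y' - t • v) < 0 :=
      (hc.continuousAt).eventually_lt_const h0
    have hev' : ∀ᶠ t in nhdsWithin (0:ℝ) (Set.Ioi 0), q (y' - t • v) < 0 :=
      hev.filter_mono nhdsWithin_le_nhds
    obtain ⟨t, hqt, ht⟩ := (hev'.and self_mem_nhdsWithin).exists
    have hfeas : (y' - t • v) ∈ {y | M *ᵥ y = w ∧ q y ≤ 0} := by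
      constructor
      · rw [mulVec_sub, hMy', mulVec_smul, hMv, smul_zero, sub_zero]
      · exact le_of_lt hqt
    have := hmin _ hfeas
    rw [dotProduct_sub, dotProduct_smul] at this
    have hvv : 0 < v ⬝ᵥ v := by
      have hnn : 0 ≤ v ⬝ᵥ v := by
        simp only [dotProduct]
        exact Finset.sum_nonneg fun i _ => mul_self_nonneg _
      rcases hnn.lt_or_eq with h | h
      · exact h
      · exact absurd (dotProduct_self_eq_zero.mp h.symm) hv
    have htpos : (0:ℝ) < t := ht
    have hsm : t • (v ⬝ᵥ v) = t * (v ⬝ᵥ v) := smul_eq_mul t (v ⬝ᵥ v)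
    nlinarith
  · exact heq
end

section
/- Let a_1, …, a_m ∈ ℝ^n, d_1, …, d_m ∈ ℝ, σ² ∈ ℝ, let A be the m×(n+1) matrix whose i-th row is (−2a_i^T, 1), let b ∈ ℝ^m have entries b_i = d_i² − ‖a_i‖² − σ², let D = diag(I_n, 0), and let g = (0_{n×1}, −1/2) ∈ ℝ^{n+1}. Then: (i) for every y ∈ ℝ^{n+1}, y^T D y + 2 g^T y = ‖[y]_{1:n}‖² − [y]_{n+1}, so the constraint y^T D y + 2 g^T y = 0 holds if and only if [y]_{n+1} = ‖[y]_{1:n}‖²; and (ii) for every x ∈ ℝ^n, setting y = (x, ‖x‖²), one has ‖A y − b‖² = ∑_{i=1}^m (‖a_i − x‖² − d_i² + σ²)². Consequently, the Bias-Eli problem of minimizing ∑_{i=1}^m (‖a_i − x‖² − d_i² + σ²)² over x ∈ ℝ^n is equivalent to minimizing ‖A y − b‖² over y ∈ ℝ^{n+1} subject to y^T D y + 2 g^T y = 0. -/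
open Matrix

/-- GTRS reformulation of the Bias-Eli problem: (i) `yᵀDy + 2gᵀy = ‖[y]_{1:n}‖² − [y]_{n+1}`,
so the constraint `yᵀDy + 2gᵀy = 0` says the last coordinate is the squared norm of the
first `n`; (ii) for `y = (x, ‖x‖²)`, `‖Ay − b‖² = ∑ᵢ (‖aᵢ − x‖² − dᵢ² + σ²)²`;
consequently the two optimization problems have the same sets of objective values. -/
theorem bias_eli_gtrs_equivalence
    (n m : ℕ) (a : Fin m → EuclideanSpace ℝ (Fin n)) (d : Fin m → ℝ) (σ2 : ℝ)
    (A : Matrix (Fin m) (Fin (n + 1)) ℝ)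
    (hA : ∀ i, A i = Fin.snoc (fun j => -2 * a i j) 1)
    (b : Fin m → ℝ) (hb : ∀ i, b i = (d i) ^ 2 - ‖a i‖ ^ 2 - σ2)
    (D : Matrix (Fin (n + 1)) (Fin (n + 1)) ℝ)
    (hD : D = Matrix.diagonal (Fin.snoc (fun _ : Fin n => (1 : ℝ)) 0))
    (g : Fin (n + 1) → ℝ)
    (hg : g = Fin.snoc (fun _ : Fin n => (0 : ℝ)) (-(1 / 2))) :
    (∀ y : Fin (n + 1) → ℝ,
      y ⬝ᵥ (D *ᵥ y) + 2 * (g ⬝ᵥ y)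
          = (∑ i : Fin n, (y i.castSucc) ^ 2) - y (Fin.last n) ∧
      (y ⬝ᵥ (D *ᵥ y) + 2 * (g ⬝ᵥ y) = 0
          ↔ y (Fin.last n) = ∑ i : Fin n, (y i.castSucc) ^ 2)) ∧
    (∀ x : EuclideanSpace ℝ (Fin n),
      ∑ i : Fin m,
          ((A *ᵥ (Fin.snoc (fun j => x j) (‖x‖ ^ 2) : Fin (n + 1) → ℝ)) i - b i) ^ 2
        = ∑ i : Fin m, (‖a i - x‖ ^ 2 - (d i) ^ 2 + σ2) ^ 2) ∧
    ({val : ℝ | ∃ x : EuclideanSpace ℝ (Fin n),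
        val = ∑ i : Fin m, (‖a i - x‖ ^ 2 - (d i) ^ 2 + σ2) ^ 2}
      = {val : ℝ | ∃ y : Fin (n + 1) → ℝ,
          y ⬝ᵥ (D *ᵥ y) + 2 * (g ⬝ᵥ y) = 0 ∧
          val = ∑ i : Fin m, ((A *ᵥ y) i - b i) ^ 2}) := by
  have norm_sq : ∀ x : EuclideanSpace ℝ (Fin n), ‖x‖ ^ 2 = ∑ j, x j ^ 2 := by
    intro x
    rw [EuclideanSpace.norm_eq, Real.sq_sqrt (by positivity)]
    simp [sq_abs]
  have key1 : ∀ y : Fin (n + 1) → ℝ,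
      y ⬝ᵥ (D *ᵥ y) + 2 * (g ⬝ᵥ y)
        = (∑ i : Fin n, (y i.castSucc) ^ 2) - y (Fin.last n) := by
    intro y
    subst hD hg
    simp [dotProduct, mulVec_diagonal, Fin.sum_univ_castSucc]
    ring_nf
  have key2 : ∀ (x : EuclideanSpace ℝ (Fin n)) (i : Fin m),
      (A *ᵥ (Fin.snoc (fun j => x j) (‖x‖ ^ 2) : Fin (n + 1) → ℝ)) i - b i
        = ‖a i - x‖ ^ 2 - (d i) ^ 2 + σ2 := by
    intro x i
    have hsub : ‖a i - x‖ ^ 2 = ∑ j, (a i j - x j) ^ 2 := by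
      rw [norm_sq]; exact Finset.sum_congr rfl fun j _ => by simp [PiLp.sub_apply]
    have expand : ∑ j, (a i j - x j) ^ 2
        = ∑ j, (a i j) ^ 2 - 2 * ∑ j, a i j * x j + ∑ j, (x j) ^ 2 := by
      rw [Finset.mul_sum, ← Finset.sum_sub_distrib, ← Finset.sum_add_distrib]
      exact Finset.sum_congr rfl fun j _ => by ring
    rw [mulVec, dotProduct, hA i, hb i, hsub, expand, norm_sq, norm_sq,
      Fin.sum_univ_castSucc]
    simp [Fin.snoc_castSucc, Fin.snoc_last, Finset.mul_sum]
    ring_nf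
  refine ⟨fun y => ⟨key1 y, ?_⟩, fun x => Finset.sum_congr rfl fun i _ => by rw [key2], ?_⟩
  · rw [key1 y]
    constructor <;> intro h <;> linarith
  · ext val
    simp only [Set.mem_setOf_eq]
    constructor
    · rintro ⟨x, hx⟩
      refine ⟨(Fin.snoc (fun j => x j) (‖x‖ ^ 2) : Fin (n + 1) → ℝ), ?_, ?_⟩
      · rw [key1]
        simp [Fin.snoc_castSucc, Fin.snoc_last, norm_sq x]
      · rw [hx]
        exact (Finset.sum_congr rfl fun i _ => by rw [key2]).symm
    · rintro ⟨y, hcon, hval⟩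
      set x : EuclideanSpace ℝ (Fin n) := WithLp.toLp 2 (fun j => y j.castSucc : Fin n → ℝ) with hx
      have hlast : y (Fin.last n) = ‖x‖ ^ 2 := by
        rw [key1 y] at hcon
        rw [norm_sq x]
        have : ∑ i : Fin n, (y i.castSucc) ^ 2 = ∑ j, x j ^ 2 := rfl
        linarith [hcon]
      have hy : y = (Fin.snoc (fun j => x j) (‖x‖ ^ 2) : Fin (n + 1) → ℝ) := by
        funext j
        refine Fin.lastCases ?_ ?_ j
        · simp [hlast]
        · intro i; simp [hx]
      refine ⟨x, ?_⟩
      rw [hval, hy]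
      exact Finset.sum_congr rfl fun i _ => by rw [key2]
end

section
/- Let a_1, …, a_m ∈ ℝ^n, d_1, …, d_m ∈ ℝ, let A be the m×(n+1) matrix whose i-th row is (−2a_i^T, 1), let b̄ ∈ ℝ^m have entries b̄_i = d_i² − ‖a_i‖², let D = diag(I_n, 0), and let g = (0_{n×1}, −1/2) ∈ ℝ^{n+1}. Then for every x ∈ ℝ^n and c ∈ ℝ, setting ȳ = (x, ‖x‖² + c) ∈ ℝ^{n+1}: (i) ‖A ȳ − b̄‖² = ∑_{i=1}^m (‖a_i − x‖² − d_i² + c)²; and (ii) ȳ^T D ȳ + 2 g^T ȳ = −c, so the constraint ȳ^T D ȳ + 2 g^T ȳ ≤ 0 holds if and only if c ≥ 0. Consequently, the Noise-Est problem of minimizing ∑_{i=1}^m (‖a_i − x‖² − d_i² + c)² over x ∈ ℝ^n and c ≥ 0 is equivalent to minimizing ‖A ȳ − b̄‖² over ȳ ∈ ℝ^{n+1} subject to ȳ^T D ȳ + 2 g^T ȳ ≤ 0. -/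
open Matrix

/-- Convex reformulation of the Noise-Est problem: for `ȳ = (x, ‖x‖² + c)`,
(i) `‖Aȳ − b̄‖² = ∑ᵢ (‖aᵢ − x‖² − dᵢ² + c)²` and (ii) `ȳᵀDȳ + 2gᵀȳ = −c`, so the
constraint `ȳᵀDȳ + 2gᵀȳ ≤ 0` holds iff `c ≥ 0`; consequently the two optimization
problems have the same sets of objective values. -/
theorem noise_est_convex_equivalence
    (n m : ℕ) (a : Fin m → EuclideanSpace ℝ (Fin n)) (d : Fin m → ℝ)
    (A : Matrix (Fin m) (Fin (n + 1)) ℝ)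
    (hA : ∀ i, A i = Fin.snoc (fun j => -2 * a i j) 1)
    (bbar : Fin m → ℝ) (hb : ∀ i, bbar i = (d i) ^ 2 - ‖a i‖ ^ 2)
    (D : Matrix (Fin (n + 1)) (Fin (n + 1)) ℝ)
    (hD : D = Matrix.diagonal (Fin.snoc (fun _ : Fin n => (1 : ℝ)) 0))
    (g : Fin (n + 1) → ℝ)
    (hg : g = Fin.snoc (fun _ : Fin n => (0 : ℝ)) (-(1 / 2))) :
    (∀ (x : EuclideanSpace ℝ (Fin n)) (c : ℝ),
      (∑ i : Fin m,
          ((A *ᵥ (Fin.snoc (fun j => x j) (‖x‖ ^ 2 + c) : Fin (n + 1) → ℝ)) i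
            - bbar i) ^ 2
        = ∑ i : Fin m, (‖a i - x‖ ^ 2 - (d i) ^ 2 + c) ^ 2) ∧
      ((Fin.snoc (fun j => x j) (‖x‖ ^ 2 + c) : Fin (n + 1) → ℝ) ⬝ᵥ
          (D *ᵥ (Fin.snoc (fun j => x j) (‖x‖ ^ 2 + c) : Fin (n + 1) → ℝ))
        + 2 * (g ⬝ᵥ (Fin.snoc (fun j => x j) (‖x‖ ^ 2 + c) : Fin (n + 1) → ℝ))
          = -c) ∧
      ((Fin.snoc (fun j => x j) (‖x‖ ^ 2 + c) : Fin (n + 1) → ℝ) ⬝ᵥ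
          (D *ᵥ (Fin.snoc (fun j => x j) (‖x‖ ^ 2 + c) : Fin (n + 1) → ℝ))
        + 2 * (g ⬝ᵥ (Fin.snoc (fun j => x j) (‖x‖ ^ 2 + c) : Fin (n + 1) → ℝ)) ≤ 0
          ↔ 0 ≤ c)) ∧
    ({val : ℝ | ∃ (x : EuclideanSpace ℝ (Fin n)) (c : ℝ), 0 ≤ c ∧
        val = ∑ i : Fin m, (‖a i - x‖ ^ 2 - (d i) ^ 2 + c) ^ 2}
      = {val : ℝ | ∃ y : Fin (n + 1) → ℝ,
          y ⬝ᵥ (D *ᵥ y) + 2 * (g ⬝ᵥ y) ≤ 0 ∧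
          val = ∑ i : Fin m, ((A *ᵥ y) i - bbar i) ^ 2}) := by
  have normsq : ∀ (v : EuclideanSpace ℝ (Fin n)), ‖v‖ ^ 2 = ∑ j, v j ^ 2 := by
    intro v
    rw [EuclideanSpace.norm_eq, Real.sq_sqrt (by positivity)]
    simp [sq_abs]
  have keyA : ∀ (x : EuclideanSpace ℝ (Fin n)) (c : ℝ) (i : Fin m),
      (A *ᵥ (Fin.snoc (fun j => x j) (‖x‖ ^ 2 + c) : Fin (n + 1) → ℝ)) i - bbar i
        = ‖a i - x‖ ^ 2 - d i ^ 2 + c := by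
    intro x c i
    have hsub : ‖a i - x‖ ^ 2 = ∑ j, (a i j - x j) ^ 2 := by
      rw [normsq (a i - x)]; rfl
    simp only [Matrix.mulVec, dotProduct, hA, hb, hsub, normsq,
      Fin.sum_univ_castSucc, Fin.snoc_castSucc, Fin.snoc_last]
    have e1 : ∑ j, (a i j - x j) ^ 2
        = ∑ j, (a i j) ^ 2 + ∑ j, (x j) ^ 2 + ∑ j, (-2 * a i j * x j) := by
      rw [← Finset.sum_add_distrib, ← Finset.sum_add_distrib]
      exact Finset.sum_congr rfl fun j _ => by ring
    rw [e1]
    ring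
  have keyC : ∀ (x : EuclideanSpace ℝ (Fin n)) (c : ℝ),
      (Fin.snoc (fun j => x j) (‖x‖ ^ 2 + c) : Fin (n + 1) → ℝ) ⬝ᵥ
          (D *ᵥ (Fin.snoc (fun j => x j) (‖x‖ ^ 2 + c) : Fin (n + 1) → ℝ))
        + 2 * (g ⬝ᵥ (Fin.snoc (fun j => x j) (‖x‖ ^ 2 + c) : Fin (n + 1) → ℝ)) = -c := by
    intro x c
    simp only [hD, hg, dotProduct, Matrix.mulVec_diagonal,
      Fin.sum_univ_castSucc, Fin.snoc_castSucc, Fin.snoc_last]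
    simp [normsq x]
    ring
  refine ⟨fun x c => ⟨?_, keyC x c, ?_⟩, ?_⟩
  · exact Finset.sum_congr rfl fun i _ => by rw [keyA x c i]
  · rw [keyC x c]; constructor <;> intro h <;> linarith
  · ext v
    simp only [Set.mem_setOf_eq]
    constructor
    · rintro ⟨x, c, hc, rfl⟩
      refine ⟨Fin.snoc (fun j => x j) (‖x‖ ^ 2 + c), by rw [keyC x c]; linarith, ?_⟩
      exact (Finset.sum_congr rfl fun i _ => by rw [keyA x c i]).symm
    · rintro ⟨y, hy, rfl⟩
      set x : EuclideanSpace ℝ (Fin n) := WithLp.toLp 2 (fun j : Fin n => y j.castSucc) with hx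
      set c : ℝ := y (Fin.last n) - ‖x‖ ^ 2 with hc
      have hyy : y = (Fin.snoc (fun j => x j) (‖x‖ ^ 2 + c) : Fin (n + 1) → ℝ) := by
        funext j
        refine Fin.lastCases ?_ ?_ j
        · simp [hc]
        · intro k; simp [hx]
      rw [hyy] at hy ⊢
      rw [keyC x c] at hy
      exact ⟨x, c, by linarith, Finset.sum_congr rfl fun i _ => by rw [keyA x c i]⟩
end

section
/- (√m-consistency of the Bias-Eli-Lin estimator.) Let (a_i)_{i∈ℕ} be a bounded sequence in ℝ^n, let x^o ∈ ℝ^n, and let (r_i)_{i∈ℕ} be i.i.d. real Gaussian random variables with mean 0 and variance σ² > 0 on a probability space, with range measurements d_i = ‖a_i − x^o‖ + r_i. For each m, let A_m be the m×(n+1) matrix whose i-th row is (−2a_i^T, 1) for i = 1, …, m, and let b_m ∈ ℝ^m have entries d_i² − ‖a_i‖² − σ². Suppose there exist c₀ > 0 and M₀ such that for all m > M₀ the smallest eigenvalue of (1/m)·A_m^T A_m is at least c₀ (in particular A_m^T A_m is invertible). Let ŷ_m = (A_m^T A_m)^{-1} A_m^T b_m and y^o = (x^o, ‖x^o‖²)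 ∈ ℝ^{n+1}. Then ŷ_m − y^o = O_p(1/√m): for every ε > 0 there exist finite N and M such that P(√m·‖ŷ_m − y^o‖ > N) < ε for all m > M. -/
open MeasureTheory ProbabilityTheory Matrix
open scoped NNReal ENNReal

section Helpers
open scoped NNReal ENNReal

lemma gauss_vol_int (v : ℝ≥0) (hv : v ≠ 0) (k : ℕ) :
    Integrable (fun x : ℝ => x ^ k * Real.exp (-(2 * (v:ℝ))⁻¹ * x ^ 2)) := by
  have hvR : (0:ℝ) < (v:ℝ) := lt_of_le_of_ne (v.coe_nonneg) (by exact_mod_cast (Ne.symm hv))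
  have hb : (0:ℝ) < (2 * (v:ℝ))⁻¹ := by positivity
  have := integrable_rpow_mul_exp_neg_mul_sq hb (s := (k:ℝ)) (lt_of_lt_of_le neg_one_lt_zero (Nat.cast_nonneg k))
  simpa [Real.rpow_natCast] using this

lemma gauss_pow_int (v : ℝ≥0) (hv : v ≠ 0) (k : ℕ) :
    Integrable (fun x : ℝ => x ^ k) (gaussianReal 0 v) := by
  have hvR : (0:ℝ) < (v:ℝ) := lt_of_le_of_ne (v.coe_nonneg) (by exact_mod_cast (Ne.symm hv))
  rw [gaussianReal_of_var_ne_zero 0 hv,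
    integrable_withDensity_iff (measurable_gaussianPDF 0 v)
      (Filter.Eventually.of_forall fun x => ENNReal.ofReal_lt_top)]
  have : (fun x : ℝ => x ^ k * (gaussianPDF 0 v x).toReal)
      = fun x => (Real.sqrt (2 * Real.pi * v))⁻¹ *
          (x ^ k * Real.exp (-(2 * (v:ℝ))⁻¹ * x ^ 2)) := by
    funext x
    rw [gaussianPDF, ENNReal.toReal_ofReal (gaussianPDFReal_nonneg _ _ _), gaussianPDFReal]
    have : -(x - 0) ^ 2 / (2 * (v:ℝ)) = -(2 * (v:ℝ))⁻¹ * x ^ 2 := by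
      field_simp
      ring
    rw [this]; ring
  rw [this]
  exact (gauss_vol_int v hv k).const_mul _

lemma gauss_integral_density (v : ℝ≥0) (hv : v ≠ 0) (f : ℝ → ℝ) :
    ∫ x, f x ∂(gaussianReal 0 v) = ∫ x, gaussianPDFReal 0 v x * f x := by
  rw [gaussianReal_of_var_ne_zero 0 hv]
  have h1 : (volume : Measure ℝ).withDensity (gaussianPDF 0 v)
      = (volume : Measure ℝ).withDensity
        (fun x => ((Real.toNNReal (gaussianPDFReal 0 v x) : ℝ≥0) : ℝ≥0∞)) := rfl
  rw [h1, integral_withDensity_eq_integral_smul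
    ((measurable_gaussianPDFReal 0 v).real_toNNReal)]
  congr 1
  funext x
  rw [NNReal.smul_def, smul_eq_mul, Real.coe_toNNReal _ (gaussianPDFReal_nonneg _ _ _)]

lemma gauss_odd (v : ℝ≥0) (hv : v ≠ 0) {k : ℕ} (hk : Odd k) :
    ∫ x, x ^ k ∂(gaussianReal 0 v) = 0 := by
  rw [gauss_integral_density v hv]
  set g : ℝ → ℝ := fun x => gaussianPDFReal 0 v x * x ^ k with hg
  have hneg : ∀ x, g (-x) = - g x := by
    intro x
    simp only [hg, gaussianPDFReal, hk.neg_pow]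
    rw [show (-x - 0) ^ 2 = (x - 0) ^ 2 by ring]
    ring
  have h2 : ∫ x, g x = - ∫ x, g x := by
    conv_lhs => rw [← integral_neg_eq_self g volume]
    simp only [hneg]
    rw [integral_neg]
  linarith [h2]

lemma gauss_even_vol (v : ℝ≥0) (hv : v ≠ 0) (j : ℕ) (hj : 0 < j) :
    ∫ x : ℝ, x ^ (2 * j) * Real.exp (-(2 * (v:ℝ))⁻¹ * x ^ 2)
      = (2 * (v:ℝ))⁻¹ ^ (-(((2 * j : ℕ) : ℝ) + 1) / 2)
          * Real.Gamma ((((2 * j : ℕ) : ℝ) + 1) / 2) := by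
  have hvR : (0:ℝ) < (v:ℝ) := lt_of_le_of_ne (v.coe_nonneg) (by exact_mod_cast (Ne.symm hv))
  have hb : (0:ℝ) < (2 * (v:ℝ))⁻¹ := by positivity
  set b : ℝ := (2 * (v:ℝ))⁻¹ with hbdef
  have heven : (fun x : ℝ => x ^ (2 * j) * Real.exp (-b * x ^ 2))
      = fun x : ℝ => (fun t : ℝ => t ^ (2 * j) * Real.exp (-b * t ^ 2)) |x| := by
    funext x
    simp only
    rw [pow_mul, pow_mul, sq_abs]
  calc ∫ x : ℝ, x ^ (2 * j) * Real.exp (-b * x ^ 2)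
      = 2 * ∫ x in Set.Ioi (0:ℝ), x ^ (2 * j) * Real.exp (-b * x ^ 2) := by
        conv_lhs => rw [heven]
        exact integral_comp_abs (f := fun t => t ^ (2 * j) * Real.exp (-b * t ^ 2))
    _ = 2 * ∫ x in Set.Ioi (0:ℝ), x ^ (((2 * j : ℕ) : ℝ)) * Real.exp (-b * x ^ ((2:ℝ))) := by
        congr 1
        refine setIntegral_congr_fun measurableSet_Ioi (fun x _ => ?_)
        rw [Real.rpow_natCast, show ((2:ℝ)) = (((2:ℕ)):ℝ) by norm_num, Real.rpow_natCast]
    _ = b ^ (-(((2 * j : ℕ) : ℝ) + 1) / 2)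
          * Real.Gamma ((((2 * j : ℕ) : ℝ) + 1) / 2) := by
        rw [integral_rpow_mul_exp_neg_mul_rpow (by norm_num)
          (lt_of_lt_of_le neg_one_lt_zero (Nat.cast_nonneg _)) hb]
        ring

lemma gauss_density_pow (v : ℝ≥0) (hv : v ≠ 0) (k : ℕ) :
    (fun x : ℝ => gaussianPDFReal 0 v x * x ^ k)
      = fun x : ℝ => (Real.sqrt (2 * Real.pi * v))⁻¹ *
          (x ^ k * Real.exp (-(2 * (v:ℝ))⁻¹ * x ^ 2)) := by
  have hvR : (0:ℝ) < (v:ℝ) := lt_of_le_of_ne (v.coe_nonneg) (by exact_mod_cast (Ne.symm hv))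
  funext x
  rw [gaussianPDFReal]
  have : -(x - 0) ^ 2 / (2 * (v:ℝ)) = -(2 * (v:ℝ))⁻¹ * x ^ 2 := by field_simp; ring
  rw [this]; ring

lemma gauss_rpow_half (x : ℝ) (hx : 0 < x) (k : ℕ) :
    x ^ (((k:ℕ):ℝ) + 1/2) = x ^ k * Real.sqrt x := by
  rw [Real.rpow_add hx, Real.rpow_natCast, Real.sqrt_eq_rpow]

lemma gauss_m2 (v : ℝ≥0) (hv : v ≠ 0) :
    ∫ x, x ^ 2 ∂(gaussianReal 0 v) = (v:ℝ) := by
  have hvR : (0:ℝ) < (v:ℝ) := lt_of_le_of_ne (v.coe_nonneg) (by exact_mod_cast (Ne.symm hv))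
  have h2v : (0:ℝ) < 2 * (v:ℝ) := by positivity
  rw [gauss_integral_density v hv, gauss_density_pow v hv 2, integral_const_mul]
  have h2 : (2 : ℕ) = 2 * 1 := by norm_num
  rw [show (fun x : ℝ => x ^ 2 * Real.exp (-(2 * (v:ℝ))⁻¹ * x ^ 2))
      = fun x : ℝ => x ^ (2 * 1) * Real.exp (-(2 * (v:ℝ))⁻¹ * x ^ 2) by norm_num,
    gauss_even_vol v hv 1 one_pos]
  have hΓ : Real.Gamma ((((2 * 1 : ℕ) : ℝ) + 1) / 2) = Real.sqrt Real.pi / 2 := by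
    rw [show ((((2 * 1 : ℕ) : ℝ) + 1) / 2) = 1/2 + 1 by norm_num,
      Real.Gamma_add_one (by norm_num), Real.Gamma_one_half_eq]
    ring
  have hbp : ((2 * (v:ℝ))⁻¹) ^ (-(((2 * 1 : ℕ) : ℝ) + 1) / 2)
      = (2 * (v:ℝ)) * Real.sqrt (2 * (v:ℝ)) := by
    rw [Real.inv_rpow h2v.le, ← Real.rpow_neg h2v.le,
      show (-(-(((2 * 1 : ℕ) : ℝ) + 1) / 2)) = ((1:ℕ):ℝ) + 1/2 by norm_num,
      gauss_rpow_half _ h2v]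
    ring
  rw [hΓ, hbp, show (2:ℝ) * Real.pi * (v:ℝ) = (2 * (v:ℝ)) * Real.pi by ring,
    Real.sqrt_mul h2v.le]
  have hs : Real.sqrt (2 * (v:ℝ)) ≠ 0 := by positivity
  have hp : Real.sqrt Real.pi ≠ 0 := by positivity
  field_simp

lemma gauss_m4 (v : ℝ≥0) (hv : v ≠ 0) :
    ∫ x, x ^ 4 ∂(gaussianReal 0 v) = 3 * (v:ℝ) ^ 2 := by
  have hvR : (0:ℝ) < (v:ℝ) := lt_of_le_of_ne (v.coe_nonneg) (by exact_mod_cast (Ne.symm hv))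
  have h2v : (0:ℝ) < 2 * (v:ℝ) := by positivity
  rw [gauss_integral_density v hv, gauss_density_pow v hv 4, integral_const_mul]
  rw [show (fun x : ℝ => x ^ 4 * Real.exp (-(2 * (v:ℝ))⁻¹ * x ^ 2))
      = fun x : ℝ => x ^ (2 * 2) * Real.exp (-(2 * (v:ℝ))⁻¹ * x ^ 2) by norm_num,
    gauss_even_vol v hv 2 two_pos]
  have hΓ : Real.Gamma ((((2 * 2 : ℕ) : ℝ) + 1) / 2) = 3 * Real.sqrt Real.pi / 4 := by
    rw [show ((((2 * 2 : ℕ) : ℝ) + 1) / 2) = 3/2 + 1 by norm_num,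
      Real.Gamma_add_one (by norm_num),
      show (3/2 : ℝ) = 1/2 + 1 by norm_num,
      Real.Gamma_add_one (by norm_num), Real.Gamma_one_half_eq]
    ring
  have hbp : ((2 * (v:ℝ))⁻¹) ^ (-(((2 * 2 : ℕ) : ℝ) + 1) / 2)
      = (2 * (v:ℝ)) ^ 2 * Real.sqrt (2 * (v:ℝ)) := by
    rw [Real.inv_rpow h2v.le, ← Real.rpow_neg h2v.le,
      show (-(-(((2 * 2 : ℕ) : ℝ) + 1) / 2)) = ((2:ℕ):ℝ) + 1/2 by norm_num,
      gauss_rpow_half _ h2v]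
  rw [hΓ, hbp, show (2:ℝ) * Real.pi * (v:ℝ) = (2 * (v:ℝ)) * Real.pi by ring,
    Real.sqrt_mul h2v.le]
  have hs : Real.sqrt (2 * (v:ℝ)) ≠ 0 := by positivity
  have hp : Real.sqrt Real.pi ≠ 0 := by positivity
  field_simp
  ring

lemma poly4_gauss (v : ℝ≥0) (hv : v ≠ 0) (c4 c3 c2 c1 c0 : ℝ) :
    Integrable (fun x : ℝ => c4*x^4 + c3*x^3 + c2*x^2 + c1*x + c0) (gaussianReal 0 v) ∧
    ∫ x, (c4*x^4 + c3*x^3 + c2*x^2 + c1*x + c0) ∂(gaussianReal 0 v)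
      = c4*(3*(v:ℝ)^2) + c2*(v:ℝ) + c0 := by
  have I4 := (gauss_pow_int v hv 4).const_mul c4
  have I3 := (gauss_pow_int v hv 3).const_mul c3
  have I2 := (gauss_pow_int v hv 2).const_mul c2
  have I1 : Integrable (fun x : ℝ => c1 * x) (gaussianReal 0 v) := by
    simpa [pow_one] using (gauss_pow_int v hv 1).const_mul c1
  have I0 : Integrable (fun _ : ℝ => c0) (gaussianReal 0 v) := integrable_const c0
  constructor
  · exact ((((I4.add I3).add I2).add I1).add I0)
  have e0 := integral_add ((((I4.add I3).add I2).add I1)) I0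
  have e1 := integral_add (((I4.add I3).add I2)) I1
  have e2 := integral_add ((I4.add I3)) I2
  have e3 := integral_add I4 I3
  simp only [Pi.add_apply] at e0 e1 e2 e3
  rw [e0, e1, e2, e3,
    integral_const_mul, integral_const_mul, integral_const_mul, integral_const_mul,
    integral_const]
  have h1 : ∫ x : ℝ, x ∂(gaussianReal 0 v) = 0 := by
    simpa [pow_one] using gauss_odd v hv (k := 1) odd_one
  rw [gauss_m4 v hv, gauss_m2 v hv, gauss_odd v hv (k := 3) (by decide), h1]
  simp

lemma euclid_norm_sq {n : ℕ} (y : EuclideanSpace ℝ (Fin n)) :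
    ‖y‖ ^ 2 = ∑ j, (y j) ^ 2 := by
  rw [EuclideanSpace.norm_eq, Real.sq_sqrt (Finset.sum_nonneg fun j _ => sq_nonneg _)]
  simp [Real.norm_eq_abs, sq_abs]

lemma euclid_coord_le {n : ℕ} (y : EuclideanSpace ℝ (Fin n)) (j : Fin n) :
    |y j| ≤ ‖y‖ := by
  rw [EuclideanSpace.norm_eq, ← Real.sqrt_sq_eq_abs]
  apply Real.sqrt_le_sqrt
  have := Finset.single_le_sum (f := fun i => ‖y i‖ ^ 2)
    (fun i _ => sq_nonneg _) (Finset.mem_univ j)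
  simpa [Real.norm_eq_abs, sq_abs] using this

end Helpers

set_option maxHeartbeats 1600000 in
/-- √m-consistency of the Bias-Eli-Lin estimator: with bounded sensor positions,
i.i.d. Gaussian range noises, `b_i = d_i² − ‖a_i‖² − σ²`, and the smallest eigenvalue
of `(1/m)AₘᵀAₘ` eventually bounded below by `c₀ > 0`, the estimator
`ŷ_m = (AₘᵀAₘ)⁻¹Aₘᵀb_m` satisfies `ŷ_m − y^o = O_p(1/√m)` where `y^o = (x^o, ‖x^o‖²)`. -/
theorem bias_eli_lin_sqrt_m_consistent
    {Ω : Type*} [MeasurableSpace Ω] (μ : Measure Ω) [IsProbabilityMeasure μ]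
    (n : ℕ) (a : ℕ → EuclideanSpace ℝ (Fin n)) (hbdd : ∃ C : ℝ, ∀ i, ‖a i‖ ≤ C)
    (xo : EuclideanSpace ℝ (Fin n))
    (v : NNReal) (hv : v ≠ 0)
    (r : ℕ → Ω → ℝ) (hmeas : ∀ i, Measurable (r i))
    (hindep : iIndepFun r μ)
    (hlaw : ∀ i, μ.map (r i) = gaussianReal 0 v)
    (d : ℕ → Ω → ℝ) (hd : ∀ i ω, d i ω = ‖a i - xo‖ + r i ω)
    (A : (m : ℕ) → Matrix (Fin m) (Fin (n + 1)) ℝ)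
    (hA : ∀ m (i : Fin m), A m i = Fin.snoc (fun j => -2 * a (i : ℕ) j) 1)
    (b : (m : ℕ) → Ω → Fin m → ℝ)
    (hb : ∀ m ω (i : Fin m),
      b m ω i = (d (i : ℕ) ω) ^ 2 - ‖a (i : ℕ)‖ ^ 2 - (v : ℝ))
    (c0 : ℝ) (hc0 : 0 < c0) (M0 : ℕ)
    (heig : ∀ m : ℕ, M0 < m → ∀ x : Fin (n + 1) → ℝ,
      c0 * (∑ j, x j ^ 2) ≤ (1 / (m : ℝ)) * (x ⬝ᵥ (((A m)ᵀ * A m) *ᵥ x)))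
    (yhat : (m : ℕ) → Ω → Fin (n + 1) → ℝ)
    (hy : ∀ m ω, yhat m ω = (((A m)ᵀ * A m)⁻¹ * (A m)ᵀ) *ᵥ b m ω)
    (yo : Fin (n + 1) → ℝ)
    (hyo : yo = Fin.snoc (fun i => xo i) (‖xo‖ ^ 2)) :
    ∀ ε : ℝ, 0 < ε → ∃ (N : ℝ) (M : ℕ), ∀ m : ℕ, M < m →
      μ {ω | N < Real.sqrt m * Real.sqrt (∑ j, (yhat m ω j - yo j) ^ 2)}
        < ENNReal.ofReal ε := by
  classical
  obtain ⟨C, hC⟩ := hbdd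
  have hC0 : 0 ≤ C := le_trans (norm_nonneg (a 0)) (hC 0)
  have hvR : (0:ℝ) < (v:ℝ) := lt_of_le_of_ne v.coe_nonneg (by exact_mod_cast (Ne.symm hv))
  set K : ℝ := C + ‖xo‖ with hKdef
  have hK0 : 0 ≤ K := by positivity
  have hK : ∀ i, ‖a i - xo‖ ≤ K :=
    fun i => le_trans (norm_sub_le _ _) (add_le_add (hC i) le_rfl)
  set Ca : ℝ := 2 * C + 1 with hCadef
  have hCa0 : 0 < Ca := by positivity
  set V : ℝ := 4 * K ^ 2 * ((v:ℝ)) + 2 * ((v:ℝ)) ^ 2 with hVdef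
  have hV0 : 0 ≤ V := by positivity
  -- the noise terms
  set φ : ℕ → ℝ → ℝ := fun i x => 2 * ‖a i - xo‖ * x + (x ^ 2 - ((v:ℝ))) with hφdef
  have hφmeas : ∀ i, Measurable (φ i) := fun i =>
    ((measurable_id.const_mul _).add ((measurable_id.pow_const 2).sub measurable_const))
  set ε' : ℕ → Ω → ℝ := fun i ω => φ i (r i ω) with hεdef
  have hεmeas : ∀ i, Measurable (ε' i) := fun i => (hφmeas i).comp (hmeas i)
  -- change of variables
  have hrint : ∀ (i : ℕ) (f : ℝ → ℝ), Measurable f → Integrable f (gaussianReal 0 v) →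
      Integrable (fun ω => f (r i ω)) μ := by
    intro i f hf hfi
    have h1 : Integrable f (μ.map (r i)) := by rw [hlaw i]; exact hfi
    exact (integrable_map_measure hf.aestronglyMeasurable (hmeas i).aemeasurable).mp h1
  have hrval : ∀ (i : ℕ) (f : ℝ → ℝ), Measurable f →
      ∫ ω, f (r i ω) ∂μ = ∫ x, f x ∂(gaussianReal 0 v) := by
    intro i f hf
    rw [← hlaw i, integral_map (hmeas i).aemeasurable hf.aestronglyMeasurable]
  -- properties of the noise terms
  have hφ4 : ∀ i, φ i = fun x =>
      0*x^4 + 0*x^3 + 1*x^2 + (2 * ‖a i - xo‖)*x + (-((v:ℝ))) :=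
    fun i => funext fun x => by simp only [hφdef]; ring
  have hφint : ∀ i, Integrable (φ i) (gaussianReal 0 v) := by
    intro i; rw [hφ4 i]; exact (poly4_gauss v hv _ _ _ _ _).1
  have hφval : ∀ i, ∫ x, φ i x ∂(gaussianReal 0 v) = 0 := by
    intro i; rw [hφ4 i, (poly4_gauss v hv _ _ _ _ _).2]; ring
  have hψ4 : ∀ i, (fun x => (φ i x) ^ 2) = fun x =>
      1*x^4 + (4 * ‖a i - xo‖)*x^3 + (4 * ‖a i - xo‖^2 - 2*((v:ℝ)))*x^2
        + (-(4 * ‖a i - xo‖ * ((v:ℝ))))*x + ((v:ℝ))^2 :=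
    fun i => funext fun x => by simp only [hφdef]; ring
  have hψint : ∀ i, Integrable (fun x => (φ i x) ^ 2) (gaussianReal 0 v) := by
    intro i; rw [hψ4 i]; exact (poly4_gauss v hv _ _ _ _ _).1
  have hψval : ∀ i, ∫ x, (φ i x) ^ 2 ∂(gaussianReal 0 v) ≤ V := by
    intro i
    rw [hψ4 i, (poly4_gauss v hv _ _ _ _ _).2, hVdef]
    have h1 := hK i
    have h0 : 0 ≤ ‖a i - xo‖ := norm_nonneg _
    nlinarith [hvR.le, mul_le_mul h1 h1 h0 hK0]
  have hεint : ∀ i, Integrable (ε' i) μ := fun i => hrint i (φ i) (hφmeas i) (hφint i)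
  have hεzero : ∀ i, ∫ ω, ε' i ω ∂μ = 0 := fun i => by
    rw [hεdef]; rw [hrval i (φ i) (hφmeas i)]; exact hφval i
  have hε2int : ∀ i, Integrable (fun ω => (ε' i ω) ^ 2) μ := fun i =>
    hrint i (fun x => (φ i x) ^ 2) ((hφmeas i).pow_const 2) (hψint i)
  have hε2val : ∀ i, ∫ ω, (ε' i ω) ^ 2 ∂μ ≤ V := fun i => by
    rw [hεdef]; rw [hrval i (fun x => (φ i x) ^ 2) ((hφmeas i).pow_const 2)]
    exact hψval i
  have hε2nonneg : ∀ i, 0 ≤ ∫ ω, (ε' i ω) ^ 2 ∂μ := fun i =>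
    integral_nonneg fun ω => sq_nonneg _
  have hindepε : ∀ i j, i ≠ j → IndepFun (ε' i) (ε' j) μ := fun i j hij =>
    (hindep.indepFun hij).comp (hφmeas i) (hφmeas j)
  have hmulint : ∀ i j, i ≠ j → Integrable (fun ω => ε' i ω * ε' j ω) μ := by
    intro i j hij
    have := (hindepε i j hij).integrable_mul (hεint i) (hεint j)
    exact this
  have horth : ∀ i j, i ≠ j → ∫ ω, ε' i ω * ε' j ω ∂μ = 0 := by
    intro i j hij
    have := (hindepε i j hij).integral_fun_mul_eq_mul_integral (hεint i).aestronglyMeasurable (hεint j).aestronglyMeasurable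
    simpa [Pi.mul_apply, hεzero i, hεzero j] using this
  -- matrix entries are bounded
  have hCa : ∀ m (i : Fin m) (j : Fin (n+1)), |A m i j| ≤ Ca := by
    intro m i j
    rw [hA]
    induction j using Fin.lastCases with
    | last => rw [Fin.snoc_last]; rw [abs_one]; linarith
    | cast j' =>
      rw [Fin.snoc_castSucc]
      have h1 : |a (i:ℕ) j'| ≤ ‖a (i:ℕ)‖ := euclid_coord_le _ _
      rw [abs_mul]
      have : |(-2 : ℝ)| = 2 := by norm_num
      rw [this]
      have := hC (i : ℕ)
      linarith
  -- decomposition of b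
  have hbdec : ∀ m ω (i : Fin m), b m ω i = (A m *ᵥ yo) i + ε' (i:ℕ) ω := by
    intro m ω i
    have hAyo : (A m *ᵥ yo) i = (∑ j : Fin n, (-2 * a (i:ℕ) j) * xo j) + ‖xo‖ ^ 2 := by
      simp [Matrix.mulVec, dotProduct, hA, hyo, Fin.sum_univ_castSucc]
    have e2 : ‖a (i:ℕ)‖ ^ 2 = ∑ j, (a (i:ℕ) j) ^ 2 := euclid_norm_sq _
    have e3 : ‖xo‖ ^ 2 = ∑ j, (xo j) ^ 2 := euclid_norm_sq _
    have e14 : ‖a (i:ℕ) - xo‖ ^ 2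
        = ∑ j, (a (i:ℕ) j) ^ 2 - 2 * (∑ j, a (i:ℕ) j * xo j) + ∑ j, (xo j) ^ 2 := by
      rw [euclid_norm_sq (a (i:ℕ) - xo)]
      calc ∑ j, ((a (i:ℕ) - xo) j) ^ 2
          = ∑ j, ((a (i:ℕ) j) ^ 2 + (xo j) ^ 2 - 2 * (a (i:ℕ) j * xo j)) := by
            refine Finset.sum_congr rfl fun j _ => ?_
            have : (a (i:ℕ) - xo) j = a (i:ℕ) j - xo j := rfl
            rw [this]; ring
        _ = _ := by
            rw [Finset.sum_sub_distrib, Finset.sum_add_distrib, Finset.mul_sum]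
            ring
    have h5 : ∑ j : Fin n, (-2 * a (i:ℕ) j) * xo j = -2 * ∑ j, a (i:ℕ) j * xo j := by
      rw [Finset.mul_sum]
      exact Finset.sum_congr rfl fun j _ => by ring
    rw [hb, hd, hAyo, h5, hεdef]
    simp only [hφdef]
    linear_combination e14 - e2 - e3
  -- invertibility
  have hinv : ∀ m : ℕ, M0 < m → IsUnit ((A m)ᵀ * A m) := by
    intro m hm
    rw [← Matrix.mulVec_injective_iff_isUnit]
    intro x y hxy
    have h0 : ((A m)ᵀ * A m) *ᵥ (x - y) = 0 := by
      rw [Matrix.mulVec_sub, hxy, sub_self]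
    have h1 := heig m hm (x - y)
    rw [h0, dotProduct_zero, mul_zero] at h1
    have hS0 : ∑ j, (x - y) j ^ 2 = 0 :=
      le_antisymm (by nlinarith) (Finset.sum_nonneg fun j _ => sq_nonneg _)
    funext j
    have := (Finset.sum_eq_zero_iff_of_nonneg (fun j _ => sq_nonneg _)).mp hS0 j
      (Finset.mem_univ j)
    have h2 : (x - y) j = 0 := by
      have := pow_eq_zero_iff (n := 2) (by norm_num) |>.mp this
      exact this
    have h3 : x j - y j = 0 := h2
    linarith
  -- choose N and M
  intro ε hε
  set B : ℝ := (n + 1 : ℝ) * (Ca ^ 2 * V) with hBdef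
  have hB0 : 0 ≤ B := by positivity
  set N : ℝ := Real.sqrt (B / (c0 ^ 2 * ε)) + 1 with hNdef
  have hN1 : 1 ≤ N := le_add_of_nonneg_left (Real.sqrt_nonneg _)
  have hN0 : 0 < N := lt_of_lt_of_le one_pos hN1
  have hN2 : B / (c0 ^ 2 * ε) < N ^ 2 := by
    have hnn : 0 ≤ B / (c0 ^ 2 * ε) := by positivity
    have := Real.sq_sqrt hnn
    nlinarith [Real.sqrt_nonneg (B / (c0 ^ 2 * ε))]
  refine ⟨N, max M0 1, fun m hm => ?_⟩
  have hmM0 : M0 < m := lt_of_le_of_lt (le_max_left _ _) hm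
  have hm1 : 1 ≤ m := le_of_lt (lt_of_le_of_lt (le_max_right _ _) hm)
  have hm0 : (0:ℝ) < (m:ℝ) := by exact_mod_cast lt_of_lt_of_le one_pos hm1
  -- the key random variables
  set T : Fin (n+1) → Ω → ℝ := fun j ω => ∑ i : Fin m, A m i j * ε' (i:ℕ) ω with hTdef
  set Q : Ω → ℝ := fun ω => ∑ j : Fin (n+1), (T j ω) ^ 2 with hQdef
  have hQnonneg : ∀ ω, 0 ≤ Q ω := fun ω => Finset.sum_nonneg fun j _ => sq_nonneg _
  have hTmeas : ∀ j, Measurable (T j) := fun j =>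
    Finset.measurable_sum _ fun i _ => (hεmeas (i:ℕ)).const_mul _
  have hQmeas : Measurable Q :=
    Finset.measurable_sum _ fun j _ => (hTmeas j).pow_const 2
  -- deterministic bound
  have hdet : ∀ ω, (m:ℝ)^2 * c0^2 * (∑ j, (yhat m ω j - yo j) ^ 2) ≤ Q ω := by
    intro ω
    set z : Fin (n+1) → ℝ := yhat m ω - yo with hzdef
    have hzj : ∀ j, z j = yhat m ω j - yo j := fun j => rfl
    have hdetu : IsUnit ((A m)ᵀ * A m).det :=
      (Matrix.isUnit_iff_isUnit_det _).mp (hinv m hmM0)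
    have hATz : ((A m)ᵀ * A m) *ᵥ z = (A m)ᵀ *ᵥ (fun i : Fin m => ε' (i:ℕ) ω) := by
      rw [hzdef, Matrix.mulVec_sub]
      have h1 : ((A m)ᵀ * A m) *ᵥ yhat m ω = (A m)ᵀ *ᵥ b m ω := by
        rw [hy, Matrix.mulVec_mulVec, ← Matrix.mul_assoc,
          Matrix.mul_nonsing_inv _ hdetu, Matrix.one_mul]
      have h2 : b m ω = A m *ᵥ yo + (fun i : Fin m => ε' (i:ℕ) ω) :=
        funext fun i => hbdec m ω i
      rw [h1, h2, Matrix.mulVec_add, Matrix.mulVec_mulVec, add_sub_cancel_left]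
    have hTz : (((A m)ᵀ * A m) *ᵥ z) = fun j => T j ω := by
      rw [hATz]
      funext j
      simp [Matrix.mulVec, dotProduct, Matrix.transpose_apply, hTdef]
    set S : ℝ := ∑ j, (yhat m ω j - yo j) ^ 2 with hSdef
    have hS0 : 0 ≤ S := Finset.sum_nonneg fun j _ => sq_nonneg _
    have hz3 : (m:ℝ) * c0 * S ≤ ∑ j, z j * T j ω := by
      have h := heig m hmM0 z
      rw [hTz] at h
      have hSz : ∑ j, z j ^ 2 = S := by
        rw [hSdef]; exact Finset.sum_congr rfl fun j _ => by rw [hzj]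
      rw [hSz] at h
      have hdot : z ⬝ᵥ (fun j => T j ω) = ∑ j, z j * T j ω := rfl
      rw [hdot] at h
      have := mul_le_mul_of_nonneg_left h hm0.le
      calc (m:ℝ) * c0 * S = (m:ℝ) * (c0 * S) := by ring
        _ ≤ (m:ℝ) * (1 / (m:ℝ) * ∑ j, z j * T j ω) := this
        _ = ∑ j, z j * T j ω := by field_simp
    have hCS : (∑ j, z j * T j ω) ^ 2 ≤ S * Q ω := by
      have h := Finset.sum_mul_sq_le_sq_mul_sq Finset.univ z (fun j => T j ω)
      have hSz : ∑ j, z j ^ 2 = S := by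
        rw [hSdef]; exact Finset.sum_congr rfl fun j _ => by rw [hzj]
      rw [hSz] at h
      exact h
    rcases eq_or_lt_of_le hS0 with hSe | hSp
    · rw [← hSe]; simpa using hQnonneg ω
    · have hmc0S : 0 ≤ (m:ℝ) * c0 * S := by positivity
      have h6 : ((m:ℝ)*c0*S)^2 ≤ S * Q ω :=
        le_trans (pow_le_pow_left₀ hmc0S hz3 2) hCS
      rw [show ((m:ℝ)*c0*S)^2 = S*((m:ℝ)^2*c0^2*S) from by ring] at h6
      exact le_of_mul_le_mul_left h6 hSp
  -- event inclusion
  have hincl : {ω | N < Real.sqrt m * Real.sqrt (∑ j, (yhat m ω j - yo j) ^ 2)}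
      ⊆ {ω | ENNReal.ofReal ((m:ℝ) * (c0^2 * N^2)) ≤ ENNReal.ofReal (Q ω)} := by
    intro ω hω
    simp only [Set.mem_setOf_eq] at hω ⊢
    set S : ℝ := ∑ j, (yhat m ω j - yo j) ^ 2 with hSdef
    have hS0 : 0 ≤ S := Finset.sum_nonneg fun j _ => sq_nonneg _
    have hsqrt : Real.sqrt (m:ℝ) * Real.sqrt S = Real.sqrt ((m:ℝ) * S) :=
      (Real.sqrt_mul (Nat.cast_nonneg m) S).symm
    rw [hsqrt] at hω
    have hN2mS : N ^ 2 < (m:ℝ) * S := by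
      have := (Real.lt_sqrt hN0.le).mp hω
      exact this
    apply ENNReal.ofReal_le_ofReal
    have h8 : (m:ℝ) * (c0^2 * N^2) ≤ (m:ℝ) * (c0^2 * ((m:ℝ)*S)) :=
      mul_le_mul_of_nonneg_left
        (mul_le_mul_of_nonneg_left hN2mS.le (sq_nonneg c0)) hm0.le
    have h9 : (m:ℝ) * (c0^2*((m:ℝ)*S)) = (m:ℝ)^2*c0^2*S := by ring
    linarith [hdet ω]
  -- integrability of Q
  have hTsq_expand : ∀ j : Fin (n+1), (fun ω => (T j ω)^2)
      = fun ω => ∑ i : Fin m, ∑ i' : Fin m,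
          (A m i j * A m i' j) * (ε' (i:ℕ) ω * ε' (i':ℕ) ω) := by
    intro j
    funext ω
    rw [hTdef]
    simp only
    rw [sq, Finset.sum_mul_sum]
    refine Finset.sum_congr rfl fun i _ => Finset.sum_congr rfl fun i' _ => by ring
  have hterm_int : ∀ (j : Fin (n+1)) (i i' : Fin m),
      Integrable (fun ω => (A m i j * A m i' j) * (ε' (i:ℕ) ω * ε' (i':ℕ) ω)) μ := by
    intro j i i'
    by_cases h : (i:ℕ) = (i':ℕ)
    · rw [h]
      have := (hε2int (i':ℕ)).const_mul (A m i j * A m i' j)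
      simpa [sq] using this
    · exact (hmulint _ _ h).const_mul _
  have hTsq_int : ∀ j : Fin (n+1), Integrable (fun ω => (T j ω)^2) μ := by
    intro j
    rw [hTsq_expand j]
    exact integrable_finset_sum _ fun i _ => integrable_finset_sum _ fun i' _ =>
      hterm_int j i i'
  have hQint : Integrable Q μ := by
    rw [hQdef]
    exact integrable_finset_sum _ fun j _ => hTsq_int j
  -- expectation bound
  have hTval : ∀ j : Fin (n+1), ∫ ω, (T j ω)^2 ∂μ ≤ (m:ℝ) * (Ca^2 * V) := by
    intro j
    rw [hTsq_expand j, integral_finset_sum _ fun i _ =>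
      integrable_finset_sum _ fun i' _ => hterm_int j i i']
    have hsum : ∀ i : Fin m,
        ∫ ω, (∑ i' : Fin m, (A m i j * A m i' j) * (ε' (i:ℕ) ω * ε' (i':ℕ) ω)) ∂μ
          = (A m i j)^2 * ∫ ω, (ε' (i:ℕ) ω)^2 ∂μ := by
      intro i
      rw [integral_finset_sum _ fun i' _ => hterm_int j i i']
      rw [Finset.sum_eq_single i]
      · rw [integral_const_mul]
        simp only [← pow_two]
      · intro i' _ hne
        rw [integral_const_mul, horth _ _ (fun hcc => hne ((Fin.val_injective hcc).symm))]
        ring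
      · intro h; exact absurd (Finset.mem_univ i) h
    calc ∑ i : Fin m, ∫ ω, (∑ i' : Fin m,
            (A m i j * A m i' j) * (ε' (i:ℕ) ω * ε' (i':ℕ) ω)) ∂μ
        = ∑ i : Fin m, (A m i j)^2 * ∫ ω, (ε' (i:ℕ) ω)^2 ∂μ :=
          Finset.sum_congr rfl fun i _ => hsum i
      _ ≤ ∑ _i : Fin m, Ca^2 * V := by
          refine Finset.sum_le_sum fun i _ => ?_
          have h1 : (A m i j)^2 ≤ Ca^2 := by
            have := hCa m i j
            nlinarith [abs_nonneg (A m i j), sq_abs (A m i j)]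
          exact mul_le_mul h1 (hε2val _) (hε2nonneg _) (by positivity)
      _ = (m:ℝ) * (Ca^2 * V) := by
          rw [Finset.sum_const, Finset.card_univ, Fintype.card_fin, nsmul_eq_mul]
  have hEQ : ∫ ω, Q ω ∂μ ≤ (m:ℝ) * B := by
    rw [hQdef]
    simp only
    rw [integral_finset_sum _ fun j _ => hTsq_int j]
    calc ∑ j : Fin (n+1), ∫ ω, (T j ω)^2 ∂μ
        ≤ ∑ _j : Fin (n+1), (m:ℝ) * (Ca^2 * V) := Finset.sum_le_sum fun j _ => hTval j
      _ = (m:ℝ) * B := by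
          rw [Finset.sum_const, Finset.card_univ, Fintype.card_fin, nsmul_eq_mul, hBdef]
          push_cast
          ring
  -- Markov
  set c : ℝ := (m:ℝ) * (c0^2 * N^2) with hcdef
  have hcpos : 0 < c := by positivity
  have hmark := mul_meas_ge_le_lintegral₀ (μ := μ)
    (f := fun ω => ENNReal.ofReal (Q ω)) (hQmeas.ennreal_ofReal.aemeasurable)
    (ENNReal.ofReal c)
  have hlint : ∫⁻ ω, ENNReal.ofReal (Q ω) ∂μ = ENNReal.ofReal (∫ ω, Q ω ∂μ) :=
    (ofReal_integral_eq_lintegral_ofReal hQint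
      (Filter.Eventually.of_forall hQnonneg)).symm
  have hmeasle : μ {ω | ENNReal.ofReal c ≤ ENNReal.ofReal (Q ω)}
      ≤ ENNReal.ofReal ((m:ℝ) * B) / ENNReal.ofReal c := by
    rw [ENNReal.le_div_iff_mul_le (Or.inl (ENNReal.ofReal_pos.mpr hcpos).ne') (Or.inl ENNReal.ofReal_ne_top)]
    calc μ {ω | ENNReal.ofReal c ≤ ENNReal.ofReal (Q ω)} * ENNReal.ofReal c
        = ENNReal.ofReal c * μ {ω | ENNReal.ofReal c ≤ ENNReal.ofReal (Q ω)} := by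
          rw [mul_comm]
      _ ≤ ∫⁻ ω, ENNReal.ofReal (Q ω) ∂μ := hmark
      _ = ENNReal.ofReal (∫ ω, Q ω ∂μ) := hlint
      _ ≤ ENNReal.ofReal ((m:ℝ) * B) := ENNReal.ofReal_le_ofReal hEQ
  calc μ {ω | N < Real.sqrt m * Real.sqrt (∑ j, (yhat m ω j - yo j) ^ 2)}
      ≤ μ {ω | ENNReal.ofReal c ≤ ENNReal.ofReal (Q ω)} := measure_mono hincl
    _ ≤ ENNReal.ofReal ((m:ℝ) * B) / ENNReal.ofReal c := hmeasle
    _ = ENNReal.ofReal ((m:ℝ) * B / c) := (ENNReal.ofReal_div_of_pos hcpos).symm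
    _ < ENNReal.ofReal ε := by
        rw [ENNReal.ofReal_lt_ofReal_iff hε]
        rw [hcdef]
        have hne : (m:ℝ) ≠ 0 := hm0.ne'
        rw [mul_div_mul_left B (c0^2 * N^2) hne]
        rw [div_lt_iff₀ (by positivity)]
        have h2 : B < c0^2 * ε * N^2 := by
          have := (div_lt_iff₀ (by positivity : (0:ℝ) < c0^2 * ε)).mp hN2
          nlinarith
        nlinarith
end
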